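/- arXiv:1510.03833 — 5 statements merged into one kernel-verified Lean document; each statement's English description precedes it below -/
import Mathlib

section
/- Let Γ be a countably infinite group and ([F_n, Z_n])_{n≥1} a left Følner monotiling of Γ such that the identity e ∈ F_n for every n. Then for every fixed k ≥ 1, |Int_{F_k}(F_n) ∩ Z_k| / |F_n| → 1/|F_k| as n → ∞. -/
open scoped Pointwise
open Filter Topology

/-- `(F n)` is a left Følner sequence: each `F n` is nonempty (and finite, being a
`Finset`) and `|F n ∆ K * F n| / |F n| → 0` for every nonempty finite `K`. -/
def IsLeftFolner {Γ : Type*} [Group Γ] [DecidableEq Γ] (F : ℕ → Finset Γ) : Prop :=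
  (∀ n, (F n).Nonempty) ∧
    ∀ K : Finset Γ, K.Nonempty →
      Tendsto (fun n => ((symmDiff (F n) (K * F n)).card : ℝ) / (F n).card) atTop (𝓝 0)

/-- `[F, Z]` is a left monotiling of `Γ`: every `g ∈ Γ` is uniquely a product `f * z`
with `f ∈ F`, `z ∈ Z`, i.e. `{F z : z ∈ Z}` is a partition of `Γ`. -/
def IsLeftMonotiling {Γ : Type*} [Group Γ] (F Z : Set Γ) : Prop :=
  ∀ g : Γ, ∃! p : Γ × Γ, p.1 ∈ F ∧ p.2 ∈ Z ∧ g = p.1 * p.2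

/-- The left `K`-interior of `F`: `F` minus the left `K`-boundary `K⁻¹F ∩ K⁻¹(Γ∖F)`. -/
def leftInterior {Γ : Type*} [Group Γ] (K F : Set Γ) : Set Γ :=
  F \ ((K⁻¹ * F) ∩ (K⁻¹ * Fᶜ))

theorem stmt0 {Γ : Type*} [Group Γ] [Countable Γ] [Infinite Γ] [DecidableEq Γ]
    (F : ℕ → Finset Γ) (Z : ℕ → Set Γ)
    (hF : IsLeftFolner F)
    (htile : ∀ n, IsLeftMonotiling (↑(F n)) (Z n))
    (he : ∀ n, (1 : Γ) ∈ F n) (k : ℕ) :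
    Tendsto
      (fun n => (Nat.card ↥(leftInterior (↑(F k)) (↑(F n)) ∩ Z k) : ℝ) / (F n).card)
      atTop (𝓝 (1 / (F k).card)) := by
  classical
  have hck : 0 < (F k).card := Finset.card_pos.mpr ⟨1, he k⟩
  set c : ℝ := ((F k).card : ℝ) with hcdef
  have hc : 0 < c := by rw [hcdef]; exact_mod_cast hck
  set K : Finset Γ := F k * (F k)⁻¹ with hKdef
  -- Finset version of the interior centers
  set S : ℕ → Finset Γ := fun n => (F n).filter
    (fun z => z ∈ leftInterior (↑(F k) : Set Γ) (↑(F n)) ∩ Z k) with hSdef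
  -- bad centers
  set B : ℕ → Finset Γ := fun n => ((F k)⁻¹ * F n).filter
    (fun x => ∃ b ∈ F k, b * x ∉ F n) with hBdef
  have hScard : ∀ n, (Nat.card ↥(leftInterior (↑(F k) : Set Γ) (↑(F n)) ∩ Z k)) = (S n).card := by
    intro n
    have hset : leftInterior (↑(F k) : Set Γ) (↑(F n)) ∩ Z k = ↑(S n) := by
      ext z
      simp only [hSdef, Finset.coe_filter, Set.mem_setOf_eq, Set.mem_inter_iff]
      constructor
      · rintro ⟨hz1, hz2⟩
        exact ⟨hz1.1, hz1, hz2⟩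
      · rintro ⟨_, h⟩
        exact h
    rw [hset, Nat.card_coe_set_eq, Set.ncard_coe_finset]
  -- tiles with interior centers lie in F n
  have hsub : ∀ n, ∀ z ∈ S n, ∀ f ∈ F k, f * z ∈ F n := by
    intro n z hz f hf
    simp only [hSdef, Finset.mem_filter, Set.mem_inter_iff, leftInterior, Set.mem_diff] at hz
    obtain ⟨hzFn, ⟨_, hzbd⟩, _⟩ := hz
    by_contra hfz
    apply hzbd
    constructor
    · exact Set.mem_mul.mpr ⟨1, by simp [he k], z, by simpa using hzFn, by simp⟩
    · refine Set.mem_mul.mpr ⟨f⁻¹, ?_, f * z, ?_, by group⟩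
      · simpa using hf
      · simpa using hfz
  -- upper bound: c * |S n| ≤ |F n|
  have hA : ∀ n, (F k).card * (S n).card ≤ (F n).card := by
    intro n
    have := Finset.card_le_card_of_injOn (fun p : Γ × Γ => p.1 * p.2)
      (s := (F k) ×ˢ S n) (t := F n)
      (by
        rintro ⟨f, z⟩ hp
        rw [Finset.mem_coe, Finset.mem_product] at hp
        exact hsub n z hp.2 f hp.1)
      (by
        rintro ⟨f1, z1⟩ hp ⟨f2, z2⟩ hq hfz
        simp only [Finset.coe_product, Set.mem_prod, Finset.mem_coe] at hp hq
        have hz1 : z1 ∈ Z k := by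
          have := hp.2; simp only [hSdef, Finset.mem_filter, Set.mem_inter_iff] at this
          exact this.2.2
        have hz2 : z2 ∈ Z k := by
          have := hq.2; simp only [hSdef, Finset.mem_filter, Set.mem_inter_iff] at this
          exact this.2.2
        obtain ⟨p, _, hpuniq⟩ := htile k (f1 * z1)
        have e1 : (f1, z1) = p := hpuniq (f1, z1) ⟨by simpa using hp.1, hz1, rfl⟩
        have e2 : (f2, z2) = p := hpuniq (f2, z2) ⟨by simpa using hq.1, hz2, hfz⟩
        exact e1.trans e2.symm)
    simpa [Finset.card_product] using this
  -- lower bound: |F n| ≤ c * |S n| + c * |B n|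
  have hB2 : ∀ n, (F n).card ≤ (F k).card * (S n).card + (F k).card * (B n).card := by
    intro n
    have hcover : F n ⊆ F k * (S n ∪ B n) := by
      intro g hg
      obtain ⟨⟨f, z⟩, ⟨hf, hz, hgz⟩, _⟩ := htile k g
      simp only at hf hz hgz
      have hzmem : z ∈ (F k)⁻¹ * F n := by
        refine Finset.mem_mul.mpr ⟨f⁻¹, ?_, g, hg, by rw [hgz]; group⟩
        simpa using hf
      have hzSB : z ∈ S n ∪ B n := by
        by_cases hzS : z ∈ S n
        · exact Finset.mem_union_left _ hzS
        · refine Finset.mem_union_right _ ?_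
          simp only [hBdef, Finset.mem_filter]
          refine ⟨hzmem, ?_⟩
          by_contra hall
          push_neg at hall
          apply hzS
          have hzFn : z ∈ F n := by simpa using hall 1 (he k)
          simp only [hSdef, Finset.mem_filter, Set.mem_inter_iff]
          refine ⟨hzFn, ⟨by simpa using hzFn, ?_⟩, hz⟩
          rintro ⟨-, hbd⟩
          obtain ⟨u, hu, v, hv, huv⟩ := Set.mem_mul.mp hbd
          rw [Set.mem_inv] at hu
          rw [Finset.mem_coe] at hu
          apply hv
          have : u⁻¹ * z = v := by rw [← huv]; group
          rw [← this]
          exact Finset.mem_coe.mpr (hall u⁻¹ hu)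
      exact Finset.mem_mul.mpr ⟨f, by simpa using hf, z, hzSB, hgz.symm⟩
    calc (F n).card ≤ (F k * (S n ∪ B n)).card := Finset.card_le_card hcover
      _ ≤ (F k).card * (S n ∪ B n).card := Finset.card_mul_le
      _ ≤ (F k).card * ((S n).card + (B n).card) :=
          Nat.mul_le_mul_left _ (Finset.card_union_le _ _)
      _ = (F k).card * (S n).card + (F k).card * (B n).card := by ring
  -- boundary is small: |B n| ≤ c * |F n ∆ K F n|
  have hC : ∀ n, (B n).card ≤ (F k).card * (symmDiff (F n) (K * F n)).card := by
    intro n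
    have hcover : B n ⊆ (F k)⁻¹ * symmDiff (F n) (K * F n) := by
      intro x hx
      simp only [hBdef, Finset.mem_filter] at hx
      obtain ⟨hx1, b, hb, hbx⟩ := hx
      obtain ⟨u, hu, y, hy, huy⟩ := Finset.mem_mul.mp hx1
      rw [Finset.mem_inv'] at hu
      have hbxK : b * x ∈ K * F n := by
        refine Finset.mem_mul.mpr ⟨b * u, ?_, y, hy, by rw [← huy]; group⟩
        exact Finset.mem_mul.mpr ⟨b, hb, u, by simpa using hu, rfl⟩
      have hsd : b * x ∈ symmDiff (F n) (K * F n) := by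
        rw [Finset.mem_symmDiff]
        exact Or.inr ⟨hbxK, hbx⟩
      refine Finset.mem_mul.mpr ⟨b⁻¹, ?_, b * x, hsd, by group⟩
      rw [Finset.mem_inv']
      simpa using hb
    calc (B n).card ≤ ((F k)⁻¹ * symmDiff (F n) (K * F n)).card := Finset.card_le_card hcover
      _ ≤ ((F k)⁻¹).card * (symmDiff (F n) (K * F n)).card := Finset.card_mul_le
      _ = (F k).card * (symmDiff (F n) (K * F n)).card := by rw [Finset.card_inv]
  -- pass to real numbers and squeeze
  have hFn : ∀ n, (0 : ℝ) < ((F n).card : ℝ) := by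
    intro n
    exact_mod_cast Finset.card_pos.mpr (hF.1 n)
  have hupper : ∀ n, ((S n).card : ℝ) / (F n).card ≤ 1 / c := by
    intro n
    rw [div_le_div_iff₀ (hFn n) hc]
    have h1 : c * (S n).card ≤ ((F n).card : ℝ) := by
      rw [hcdef]; exact_mod_cast hA n
    nlinarith
  have hlower : ∀ n,
      1 / c - c * (((symmDiff (F n) (K * F n)).card : ℝ) / (F n).card)
        ≤ ((S n).card : ℝ) / (F n).card := by
    intro n
    have h1 : ((F n).card : ℝ) ≤ c * (S n).card + c * (B n).card := by
      rw [hcdef]; exact_mod_cast hB2 n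
    have h2 : ((B n).card : ℝ) ≤ c * (symmDiff (F n) (K * F n)).card := by
      rw [hcdef]; exact_mod_cast hC n
    rw [sub_le_iff_le_add, ← mul_div_assoc, ← add_div, div_le_div_iff₀ hc (hFn n)]
    have hN := hFn n
    nlinarith [mul_le_mul_of_nonneg_left h2 (le_of_lt hc)]
  have hlim : Tendsto
      (fun n => 1 / c - c * (((symmDiff (F n) (K * F n)).card : ℝ) / (F n).card))
      atTop (𝓝 (1 / c)) := by
    have := (hF.2 K ⟨1 * 1⁻¹, Finset.mul_mem_mul (he k) (Finset.inv_mem_inv (he k))⟩).const_mul c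
    have h0 : Tendsto
        (fun n => c * (((symmDiff (F n) (K * F n)).card : ℝ) / (F n).card)) atTop (𝓝 0) := by
      simpa using this
    simpa using (tendsto_const_nhds (x := 1 / c) (f := atTop)).sub h0
  have : Tendsto (fun n => ((S n).card : ℝ) / (F n).card) atTop (𝓝 (1 / c)) :=
    tendsto_of_tendsto_of_tendsto_of_le_of_le hlim tendsto_const_nhds hlower hupper
  simpa only [hScard] using this
end

section
/- Let Γ be a countably infinite group and ([F_n, Z_n])_{n≥1} a left Følner monotiling of Γ with e ∈ F_n for every n such that (F_n) is a tempered two-sided Følner sequence. Let Γ act by measure-preserving maps on a probability space (X, μ) and suppose that for every k ≥ 1 the indicator 1_{Z_k} is a good weight for X along (F_n). Then for every bounded measurable f : X → ℝ and every k ≥ 1, for μ-a.e. ω ∈ X the following three limits exist (the sets averaged over being nonempty for all sufficiently large n) and coincide: |F_k| · lim_{n→∞} (1/|F_n|) ∑_{g∈F_n} 1_{Z_k}(g) f(g·ω), lim_{n→∞} (1/|F_n ∩ Z_k|) ∑_{g∈F_n∩Z_k} f(g·ω), and lim_{n→∞} (1/|Int_{F_k}(F_n) ∩ Int^r_{F_k⁻¹}(F_n)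 ∩ Z_k|) ∑_{g∈Int_{F_k}(F_n) ∩ Int^r_{F_k⁻¹}(F_n) ∩ Z_k} f(g·ω). -/
open scoped Pointwise
open Filter Topology MeasureTheory

/-- `(F n)` is a right Følner sequence. -/
def IsRightFolner {Γ : Type*} [Group Γ] [DecidableEq Γ] (F : ℕ → Finset Γ) : Prop :=
  (∀ n, (F n).Nonempty) ∧
    ∀ K : Finset Γ, K.Nonempty →
      Tendsto (fun n => ((symmDiff (F n) (F n * K)).card : ℝ) / (F n).card) atTop (𝓝 0)

/-- `(F n)` is tempered: `|⋃_{i<j} F i⁻¹ * F j| ≤ C |F j|` for some constant `C`. -/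
def IsTempered {Γ : Type*} [Group Γ] [DecidableEq Γ] (F : ℕ → Finset Γ) : Prop :=
  ∃ C : ℝ, ∀ j, (((Finset.range j).biUnion fun i => (F i)⁻¹ * F j).card : ℝ) ≤ C * (F j).card

/-- The right `K`-interior of `F`. -/
def rightInterior {Γ : Type*} [Group Γ] (K F : Set Γ) : Set Γ :=
  F \ ((F * K⁻¹) ∩ (Fᶜ * K⁻¹))

/-- `c` is a good weight for the `Γ`-action on `(X, μ)` along `(F n)`: for every bounded
measurable `f`, the weighted averages converge a.e. -/
def IsGoodWeight {Γ : Type*} [Group Γ] (c : Γ → ℝ) (F : ℕ → Finset Γ)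
    {X : Type*} [MeasurableSpace X] [MulAction Γ X] (μ : Measure X) : Prop :=
  ∀ f : X → ℝ, Measurable f → (∃ M, ∀ x, |f x| ≤ M) →
    ∀ᵐ ω ∂μ, ∃ L : ℝ,
      Tendsto (fun n => ((F n).card : ℝ)⁻¹ * ∑ g ∈ F n, c g * f (g • ω)) atTop (𝓝 L)

open scoped symmDiff

open Classical in
/-- The elements of `A` lying in `Z`. -/
noncomputable def filt {Γ : Type*} (A : Finset Γ) (Z : Set Γ) : Finset Γ :=
  A.filter (fun g => g ∈ Z)

lemma mem_filt {Γ : Type*} {A : Finset Γ} {Z : Set Γ} {g : Γ} :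
    g ∈ filt A Z ↔ g ∈ A ∧ g ∈ Z := by
  classical
  simp [filt]

lemma coe_filt {Γ : Type*} (A : Finset Γ) (Z : Set Γ) :
    (↑(filt A Z) : Set Γ) = (↑A : Set Γ) ∩ Z := by
  ext g; simp [mem_filt]

/-- Finitary left `T`-boundary. -/
def lBd {Γ : Type*} [Group Γ] [DecidableEq Γ] (T Fn : Finset Γ) : Finset Γ :=
  T.biUnion fun t => symmDiff Fn (t⁻¹ • Fn)

/-- Finitary right `T`-boundary. -/
def rBd {Γ : Type*} [Group Γ] [DecidableEq Γ] (T Fn : Finset Γ) : Finset Γ :=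
  T.biUnion fun t => symmDiff Fn (Fn * {t})

lemma card_symmDiff_translate {Γ : Type*} [Group Γ] [DecidableEq Γ] (Fn : Finset Γ) (t : Γ) :
    (symmDiff Fn (t⁻¹ • Fn)).card = (symmDiff Fn ({t} * Fn)).card := by
  calc (symmDiff Fn (t⁻¹ • Fn)).card
      = (t • symmDiff Fn (t⁻¹ • Fn)).card := (Finset.card_smul_finset _ _).symm
    _ = (symmDiff (t • Fn) (t • t⁻¹ • Fn)).card := by rw [Finset.smul_finset_symmDiff]
    _ = (symmDiff Fn ({t} * Fn)).card := by
        rw [smul_inv_smul, symmDiff_comm, Finset.singleton_mul]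

lemma lBd_small {Γ : Type*} [Group Γ] [DecidableEq Γ] {F : ℕ → Finset Γ}
    (hne : ∀ n, (F n).Nonempty)
    (hfol : ∀ K : Finset Γ, K.Nonempty →
      Tendsto (fun n => ((symmDiff (F n) (K * F n)).card : ℝ) / (F n).card) atTop (𝓝 0))
    (T : Finset Γ) :
    Tendsto (fun n => ((lBd T (F n)).card : ℝ) / ((F n).card : ℝ)) atTop (𝓝 0) := by
  have hFc : ∀ n, (0 : ℝ) < (F n).card := fun n => by
    exact_mod_cast Finset.card_pos.2 (hne n)
  have hle : ∀ n, ((lBd T (F n)).card : ℝ) / ((F n).card : ℝ) ≤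
      ∑ t ∈ T, ((symmDiff (F n) ({t} * F n)).card : ℝ) / ((F n).card : ℝ) := by
    intro n
    rw [← Finset.sum_div]
    refine (div_le_div_iff_of_pos_right (hFc n)).mpr ?_
    calc ((lBd T (F n)).card : ℝ)
        ≤ ((∑ t ∈ T, (symmDiff (F n) (t⁻¹ • F n)).card : ℕ) : ℝ) := by
          exact_mod_cast Finset.card_biUnion_le
      _ = ∑ t ∈ T, ((symmDiff (F n) ({t} * F n)).card : ℝ) := by
          push_cast
          exact Finset.sum_congr rfl fun t _ => by rw [card_symmDiff_translate]
  have hsum0 : Tendsto (fun n => ∑ t ∈ T,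
      ((symmDiff (F n) ({t} * F n)).card : ℝ) / ((F n).card : ℝ)) atTop (𝓝 0) := by
    have := tendsto_finset_sum T (fun t _ => hfol {t} (Finset.singleton_nonempty t))
    simpa using this
  exact squeeze_zero (fun n => by positivity) hle hsum0

lemma rBd_small {Γ : Type*} [Group Γ] [DecidableEq Γ] {F : ℕ → Finset Γ}
    (hne : ∀ n, (F n).Nonempty)
    (hfol : ∀ K : Finset Γ, K.Nonempty →
      Tendsto (fun n => ((symmDiff (F n) (F n * K)).card : ℝ) / (F n).card) atTop (𝓝 0))
    (T : Finset Γ) :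
    Tendsto (fun n => ((rBd T (F n)).card : ℝ) / ((F n).card : ℝ)) atTop (𝓝 0) := by
  have hFc : ∀ n, (0 : ℝ) < (F n).card := fun n => by
    exact_mod_cast Finset.card_pos.2 (hne n)
  have hle : ∀ n, ((rBd T (F n)).card : ℝ) / ((F n).card : ℝ) ≤
      ∑ t ∈ T, ((symmDiff (F n) (F n * {t})).card : ℝ) / ((F n).card : ℝ) := by
    intro n
    rw [← Finset.sum_div]
    refine (div_le_div_iff_of_pos_right (hFc n)).mpr ?_
    exact_mod_cast Finset.card_biUnion_le
  have hsum0 : Tendsto (fun n => ∑ t ∈ T,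
      ((symmDiff (F n) (F n * {t})).card : ℝ) / ((F n).card : ℝ)) atTop (𝓝 0) := by
    have := tendsto_finset_sum T (fun t _ => hfol {t} (Finset.singleton_nonempty t))
    simpa using this
  exact squeeze_zero (fun n => by positivity) hle hsum0

lemma ratio_tendsto {Fc a b : ℕ → ℝ} {Tc : ℝ} (hT : 0 < Tc) (hFc : ∀ n, 0 < Fc n)
    (h1 : ∀ n, Fc n ≤ Tc * a n + Tc * b n) (h2 : ∀ n, Tc * a n ≤ Fc n + Tc * b n)
    (hb : Tendsto (fun n => b n / Fc n) atTop (𝓝 0)) :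
    Tendsto (fun n => a n / Fc n) atTop (𝓝 Tc⁻¹) := by
  have key : ∀ n, |Tc * (a n / Fc n) - 1| ≤ Tc * (b n / Fc n) := by
    intro n
    have h3 : |Tc * a n - Fc n| ≤ Tc * b n := abs_le.2 ⟨by linarith [h1 n], by linarith [h2 n]⟩
    have h4 : Tc * (a n / Fc n) - 1 = (Tc * a n - Fc n) / Fc n := by
      rw [eq_div_iff (hFc n).ne', sub_mul, mul_assoc, div_mul_cancel₀ _ (hFc n).ne', one_mul]
    rw [h4, abs_div, abs_of_pos (hFc n), ← mul_div_assoc]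
    exact (div_le_div_iff_of_pos_right (hFc n)).mpr h3
  have h0 : Tendsto (fun n => Tc * (a n / Fc n) - 1) atTop (𝓝 0) := by
    refine squeeze_zero_norm key ?_
    simpa using hb.const_mul Tc
  have h1' : Tendsto (fun n => Tc * (a n / Fc n)) atTop (𝓝 1) := by
    have := h0.add (tendsto_const_nhds (x := (1 : ℝ)))
    simpa using this
  have h2' : Tendsto (fun n => Tc⁻¹ * (Tc * (a n / Fc n))) atTop (𝓝 Tc⁻¹) := by
    simpa using h1'.const_mul Tc⁻¹
  exact h2'.congr fun n => inv_mul_cancel_left₀ hT.ne' _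

lemma ratio_close {Fc a a' c : ℕ → ℝ} {L : ℝ} (hFc : ∀ n, 0 < Fc n)
    (h : ∀ n, |a' n - a n| ≤ c n) (ha : Tendsto (fun n => a n / Fc n) atTop (𝓝 L))
    (hc : Tendsto (fun n => c n / Fc n) atTop (𝓝 0)) :
    Tendsto (fun n => a' n / Fc n) atTop (𝓝 L) := by
  have h0 : Tendsto (fun n => a' n / Fc n - a n / Fc n) atTop (𝓝 0) := by
    refine squeeze_zero_norm (fun n => ?_) hc
    rw [Real.norm_eq_abs, div_sub_div_same, abs_div, abs_of_pos (hFc n)]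
    exact (div_le_div_iff_of_pos_right (hFc n)).mpr (h n)
  have := h0.add ha
  simpa using this

/-- Counting lemma for monotilings. -/
lemma count_aux {Γ : Type*} [Group Γ] [DecidableEq Γ]
    (T A B AZ : Finset Γ) (Z : Set Γ)
    (htile : ∀ g : Γ, ∃! p : Γ × Γ, p.1 ∈ (↑T : Set Γ) ∧ p.2 ∈ Z ∧ g = p.1 * p.2)
    (he : (1 : Γ) ∈ T)
    (hAZ : ∀ z, z ∈ AZ ↔ z ∈ A ∧ z ∈ Z)
    (hB : ∀ z, (∃ t ∈ T, t * z ∈ A) → (∃ s ∈ T, s * z ∉ A) → z ∈ B) :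
    A.card ≤ T.card * AZ.card + T.card * B.card ∧
      T.card * AZ.card ≤ A.card + T.card * B.card := by
  classical
  set C1 : Finset Γ := (T⁻¹ * A).filter (fun z => z ∈ Z) with hC1
  set C0 : Finset Γ := C1.filter (fun z => ∀ t ∈ T, t * z ∈ A) with hC0
  -- basic membership facts
  have hmemC1 : ∀ z, z ∈ C1 ↔ (∃ t ∈ T, t * z ∈ A) ∧ z ∈ Z := by
    intro z
    simp only [hC1, Finset.mem_filter, Finset.mem_mul, Finset.mem_inv]
    constructor
    · rintro ⟨⟨y, ⟨u, hu, rfl⟩, a, ha, rfl⟩, hz⟩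
      exact ⟨⟨u, hu, by simpa using ha⟩, hz⟩
    · rintro ⟨⟨t, ht, hta⟩, hz⟩
      exact ⟨⟨t⁻¹, ⟨t, ht, rfl⟩, t * z, hta, by group⟩, hz⟩
  -- A is covered by the tiles of C1
  have h1 : A ⊆ C1.biUnion (fun z => T.image (· * z)) := by
    intro g hg
    obtain ⟨⟨t, z⟩, ⟨ht, hz, hg'⟩, -⟩ := htile g
    simp only [Finset.mem_coe] at ht
    refine Finset.mem_biUnion.2 ⟨z, ?_, Finset.mem_image.2 ⟨t, ht, hg'.symm⟩⟩
    exact (hmemC1 z).2 ⟨⟨t, ht, by rw [← hg']; exact hg⟩, hz⟩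
  have h1c : A.card ≤ C1.card * T.card := by
    calc A.card ≤ (C1.biUnion (fun z => T.image (· * z))).card := Finset.card_le_card h1
      _ ≤ ∑ z ∈ C1, (T.image (· * z)).card := Finset.card_biUnion_le
      _ ≤ ∑ z ∈ C1, T.card := Finset.sum_le_sum fun z _ => Finset.card_image_le
      _ = C1.card * T.card := by rw [Finset.sum_const, smul_eq_mul]
  -- tiles of C0 are inside A and pairwise disjoint
  have h2 : C0.biUnion (fun z => T.image (· * z)) ⊆ A := by
    intro g hg
    obtain ⟨z, hz, hg⟩ := Finset.mem_biUnion.1 hg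
    obtain ⟨t, ht, rfl⟩ := Finset.mem_image.1 hg
    exact ((Finset.mem_filter.1 hz).2) t ht
  have hdisj : ∀ z1 ∈ C0, ∀ z2 ∈ C0, z1 ≠ z2 →
      Disjoint (T.image (· * z1)) (T.image (· * z2)) := by
    intro z1 hz1 z2 hz2 hne
    rw [Finset.disjoint_left]
    rintro g hg1 hg2
    obtain ⟨t1, ht1, rfl⟩ := Finset.mem_image.1 hg1
    obtain ⟨t2, ht2, heq⟩ := Finset.mem_image.1 hg2
    have hz1Z : z1 ∈ Z := ((hmemC1 z1).1 (Finset.mem_of_mem_filter _ hz1)).2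
    have hz2Z : z2 ∈ Z := ((hmemC1 z2).1 (Finset.mem_of_mem_filter _ hz2)).2
    obtain ⟨p, hp, hup⟩ := htile (t1 * z1)
    have e1 : (t1, z1) = p := (hup (t1, z1) ⟨by simpa using ht1, hz1Z, rfl⟩).symm ▸ rfl
    have h1' : ((t1, z1) : Γ × Γ) = p := hup (t1, z1) ⟨by simpa using ht1, hz1Z, rfl⟩
    have h2' : ((t2, z2) : Γ × Γ) = p := hup (t2, z2) ⟨by simpa using ht2, hz2Z, heq.symm⟩
    exact hne (congrArg Prod.snd (h1'.trans h2'.symm))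
  have h2c : C0.card * T.card ≤ A.card := by
    calc C0.card * T.card = ∑ z ∈ C0, T.card := by rw [Finset.sum_const, smul_eq_mul]
      _ = ∑ z ∈ C0, (T.image (· * z)).card :=
          Finset.sum_congr rfl fun z _ =>
            (Finset.card_image_of_injective _ (mul_left_injective z)).symm
      _ = (C0.biUnion (fun z => T.image (· * z))).card := (Finset.card_biUnion hdisj).symm
      _ ≤ A.card := Finset.card_le_card h2
  -- C1 \ C0 ⊆ B
  have h3 : C1 \ C0 ⊆ B := by
    intro z hz
    obtain ⟨hzC1, hzC0⟩ := Finset.mem_sdiff.1 hz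
    obtain ⟨⟨t, ht, hta⟩, hzZ⟩ := (hmemC1 z).1 hzC1
    have : ¬ ∀ s ∈ T, s * z ∈ A := fun h => hzC0 (Finset.mem_filter.2 ⟨hzC1, h⟩)
    push_neg at this
    obtain ⟨s, hs, hsa⟩ := this
    exact hB z ⟨t, ht, hta⟩ ⟨s, hs, hsa⟩
  have h3c : C1.card ≤ C0.card + B.card := by
    have hsub : C0 ⊆ C1 := Finset.filter_subset _ _
    calc C1.card = (C1 \ C0).card + C0.card := by
          rw [Finset.card_sdiff_add_card_eq_card hsub]
      _ ≤ B.card + C0.card := by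
          exact Nat.add_le_add_right (Finset.card_le_card h3) _
      _ = C0.card + B.card := Nat.add_comm _ _
  -- C0 ⊆ AZ ⊆ C1
  have h4 : C0 ⊆ AZ := by
    intro z hz
    have hzZ : z ∈ Z := ((hmemC1 z).1 (Finset.mem_of_mem_filter _ hz)).2
    have : z ∈ A := by
      have := (Finset.mem_filter.1 hz).2 1 he
      simpa using this
    exact (hAZ z).2 ⟨this, hzZ⟩
  have h5 : AZ ⊆ C1 := by
    intro z hz
    obtain ⟨hzA, hzZ⟩ := (hAZ z).1 hz
    exact (hmemC1 z).2 ⟨⟨1, he, by simpa using hzA⟩, hzZ⟩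
  have h4c : C0.card ≤ AZ.card := Finset.card_le_card h4
  have h5c : AZ.card ≤ C1.card := Finset.card_le_card h5
  constructor
  · calc A.card ≤ C1.card * T.card := h1c
      _ ≤ (C0.card + B.card) * T.card := Nat.mul_le_mul_right _ h3c
      _ ≤ (AZ.card + B.card) * T.card := Nat.mul_le_mul_right _ (Nat.add_le_add_right h4c _)
      _ = T.card * AZ.card + T.card * B.card := by ring
  · calc T.card * AZ.card ≤ T.card * C1.card := Nat.mul_le_mul_left _ h5c
      _ ≤ T.card * (C0.card + B.card) := Nat.mul_le_mul_left _ h3c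
      _ = C0.card * T.card + T.card * B.card := by ring
      _ ≤ A.card + T.card * B.card := Nat.add_le_add_right h2c _

theorem stmt3 {Γ : Type*} [Group Γ] [Countable Γ] [Infinite Γ] [DecidableEq Γ]
    (F : ℕ → Finset Γ) (Z : ℕ → Set Γ)
    (hF : IsLeftFolner F) (hFr : IsRightFolner F) (htemp : IsTempered F)
    (htile : ∀ n, IsLeftMonotiling (↑(F n)) (Z n))
    (he : ∀ n, (1 : Γ) ∈ F n)
    {X : Type*} [MeasurableSpace X] [MulAction Γ X] (μ : Measure X)
    [IsProbabilityMeasure μ]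
    (hmeas : ∀ g : Γ, Measurable fun x : X => g • x)
    (hmp : ∀ g : Γ, MeasurePreserving (fun x : X => g • x) μ μ)
    (hgood : ∀ k, IsGoodWeight (Set.indicator (Z k) 1) F μ)
    (f : X → ℝ) (hf : Measurable f) (hfb : ∃ M, ∀ x, |f x| ≤ M) (k : ℕ) :
    ∀ᵐ ω ∂μ, ∃ L : ℝ,
      (Tendsto
          (fun n => ((F k).card : ℝ) *
            (((F n).card : ℝ)⁻¹ * ∑ g ∈ F n, Set.indicator (Z k) 1 g * f (g • ω)))
          atTop (𝓝 L)) ∧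
      ((∀ᶠ n in atTop, ((↑(F n) : Set Γ) ∩ Z k).Nonempty) ∧
        Tendsto
          (fun n => (Nat.card ↥((↑(F n) : Set Γ) ∩ Z k) : ℝ)⁻¹ *
            ∑ g ∈ F n, Set.indicator (Z k) 1 g * f (g • ω))
          atTop (𝓝 L)) ∧
      ((∀ᶠ n in atTop,
          (leftInterior (↑(F k)) (↑(F n)) ∩ rightInterior ((↑(F k) : Set Γ))⁻¹ (↑(F n)) ∩
            Z k).Nonempty) ∧
        Tendsto
          (fun n => (Nat.card
              ↥(leftInterior (↑(F k)) (↑(F n)) ∩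
                  rightInterior ((↑(F k) : Set Γ))⁻¹ (↑(F n)) ∩ Z k) : ℝ)⁻¹ *
            ∑ g ∈ F n,
              Set.indicator
                (leftInterior (↑(F k)) (↑(F n)) ∩
                  rightInterior ((↑(F k) : Set Γ))⁻¹ (↑(F n)) ∩ Z k) 1 g * f (g • ω))
          atTop (𝓝 L)) := by
  classical
  obtain ⟨M, hM⟩ := hfb
  have hTpos : (0 : ℝ) < (F k).card := by
    exact_mod_cast Finset.card_pos.2 ⟨1, he k⟩
  have hFc : ∀ n, (0 : ℝ) < (F n).card := fun n => by
    exact_mod_cast Finset.card_pos.2 (hF.1 n)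
  -- counting: |F n| ≈ |F k| * |F n ∩ Z k| up to left boundary
  have hcount : ∀ n,
      (F n).card ≤ (F k).card * (filt (F n) (Z k)).card + (F k).card * (lBd (F k) (F n)).card ∧
        (F k).card * (filt (F n) (Z k)).card ≤ (F n).card + (F k).card * (lBd (F k) (F n)).card := by
    intro n
    refine count_aux (F k) (F n) (lBd (F k) (F n)) (filt (F n) (Z k)) (Z k) (htile k) (he k)
      (fun z => mem_filt) ?_
    rintro z ⟨t, ht, hta⟩ ⟨s, hs, hsa⟩
    by_cases hz : z ∈ F n
    · refine Finset.mem_biUnion.2 ⟨s, hs, Finset.mem_symmDiff.2 (Or.inl ⟨hz, ?_⟩)⟩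
      intro hc
      exact hsa (by rwa [Finset.mem_inv_smul_finset_iff, smul_eq_mul] at hc)
    · refine Finset.mem_biUnion.2 ⟨t, ht, Finset.mem_symmDiff.2 (Or.inr ⟨?_, hz⟩)⟩
      rw [Finset.mem_inv_smul_finset_iff, smul_eq_mul]
      exact hta
  have hβ := lBd_small hF.1 hF.2 (F k)
  have hγ := rBd_small hF.1 hFr.2 (F k)
  -- the density of centers
  have hr : Tendsto (fun n => ((filt (F n) (Z k)).card : ℝ) / ((F n).card : ℝ)) atTop
      (𝓝 (((F k).card : ℝ))⁻¹) := by
    refine ratio_tendsto hTpos hFc (fun n => ?_) (fun n => ?_) hβ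
    · exact_mod_cast (hcount n).1
    · exact_mod_cast (hcount n).2
  -- the averaging set of the third limit, as a finset
  have hSsub : ∀ n, leftInterior (↑(F k)) (↑(F n)) ∩
      rightInterior ((↑(F k) : Set Γ))⁻¹ (↑(F n)) ∩ Z k ⊆ (↑(F n) : Set Γ) :=
    fun n g hg => hg.1.1.1
  have hScoe : ∀ n, (↑(filt (F n) (leftInterior (↑(F k)) (↑(F n)) ∩
      rightInterior ((↑(F k) : Set Γ))⁻¹ (↑(F n)) ∩ Z k)) : Set Γ) =
      leftInterior (↑(F k)) (↑(F n)) ∩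
        rightInterior ((↑(F k) : Set Γ))⁻¹ (↑(F n)) ∩ Z k := by
    intro n
    rw [coe_filt]
    exact Set.inter_eq_self_of_subset_right (hSsub n)
  -- abbreviation for the third averaging set (finset version)
  have hSfsub : ∀ n, filt (F n) (leftInterior (↑(F k)) (↑(F n)) ∩
      rightInterior ((↑(F k) : Set Γ))⁻¹ (↑(F n)) ∩ Z k) ⊆ filt (F n) (Z k) := by
    intro n g hg
    obtain ⟨h1, h2⟩ := mem_filt.1 hg
    exact mem_filt.2 ⟨h1, h2.2⟩
  -- elements of F n ∩ Z k missing from the third set lie in the boundaries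
  have hASbd : ∀ n, filt (F n) (Z k) \ filt (F n) (leftInterior (↑(F k)) (↑(F n)) ∩
      rightInterior ((↑(F k) : Set Γ))⁻¹ (↑(F n)) ∩ Z k) ⊆ lBd (F k) (F n) ∪ rBd (F k) (F n) := by
    intro n z hz
    obtain ⟨hzA, hzS⟩ := Finset.mem_sdiff.1 hz
    obtain ⟨hzF, hzZ⟩ := mem_filt.1 hzA
    have hzS' : z ∉ leftInterior (↑(F k)) (↑(F n)) ∩
        rightInterior ((↑(F k) : Set Γ))⁻¹ (↑(F n)) ∩ Z k :=
      fun h => hzS (mem_filt.2 ⟨hzF, h⟩)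
    have hcases : z ∉ leftInterior (↑(F k)) (↑(F n)) ∨
        z ∉ rightInterior ((↑(F k) : Set Γ))⁻¹ (↑(F n)) := by
      by_contra h
      push_neg at h
      exact hzS' ⟨⟨h.1, h.2⟩, hzZ⟩
    rcases hcases with h | h
    · -- left boundary
      have hb : z ∈ ((↑(F k) : Set Γ)⁻¹ * ↑(F n)) ∩ ((↑(F k) : Set Γ)⁻¹ * (↑(F n) : Set Γ)ᶜ) := by
        by_contra hb
        exact h ⟨Finset.mem_coe.2 hzF, hb⟩
      obtain ⟨h1, h2⟩ := hb
      obtain ⟨x, hx, a, ha, hxa⟩ := Set.mem_mul.1 h1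
      obtain ⟨y, hy, b, hb', hyb⟩ := Set.mem_mul.1 h2
      have hyT : y⁻¹ ∈ F k := by rwa [Set.mem_inv, Finset.mem_coe] at hy
      have hyz : y⁻¹ * z ∉ F n := by
        have hzb : y⁻¹ * z = b := by rw [← hyb]; group
        rw [hzb]
        exact fun hc => hb' (Finset.mem_coe.2 hc)
      refine Finset.mem_union_left _ (Finset.mem_biUnion.2 ⟨y⁻¹, hyT, ?_⟩)
      refine Finset.mem_symmDiff.2 (Or.inl ⟨hzF, ?_⟩)
      intro hc
      exact hyz (by rwa [Finset.mem_inv_smul_finset_iff, smul_eq_mul] at hc)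
    · -- right boundary
      have hb : z ∈ ((↑(F n) : Set Γ) * (((↑(F k) : Set Γ))⁻¹)⁻¹) ∩
          ((↑(F n) : Set Γ)ᶜ * (((↑(F k) : Set Γ))⁻¹)⁻¹) := by
        by_contra hb
        exact h ⟨Finset.mem_coe.2 hzF, hb⟩
      rw [inv_inv] at hb
      obtain ⟨h1, h2⟩ := hb
      obtain ⟨b, hb', y, hy, hby⟩ := Set.mem_mul.1 h2
      have hyT : y ∈ F k := Finset.mem_coe.1 hy
      have hzy : z * y⁻¹ ∉ F n := by
        have hzb : z * y⁻¹ = b := by rw [← hby]; group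
        rw [hzb]
        exact fun hc => hb' (Finset.mem_coe.2 hc)
      refine Finset.mem_union_right _ (Finset.mem_biUnion.2 ⟨y, hyT, ?_⟩)
      refine Finset.mem_symmDiff.2 (Or.inl ⟨hzF, ?_⟩)
      intro hc
      obtain ⟨c, hc1, d, hd, hcd⟩ := Finset.mem_mul.1 hc
      have hdy : d = y := Finset.mem_singleton.1 hd
      refine hzy ?_
      rw [← hcd, hdy]
      simpa using hc1
  -- the density of the third set
  have hδ : Tendsto (fun n =>
      (((filt (F n) (Z k)) \
        (filt (F n) (leftInterior (↑(F k)) (↑(F n)) ∩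
          rightInterior ((↑(F k) : Set Γ))⁻¹ (↑(F n)) ∩ Z k))).card : ℝ) /
        ((F n).card : ℝ)) atTop (𝓝 0) := by
    refine squeeze_zero (g := fun n => ((lBd (F k) (F n)).card : ℝ) / ((F n).card : ℝ) +
        ((rBd (F k) (F n)).card : ℝ) / ((F n).card : ℝ)) (fun n => by positivity)
      (fun n => ?_) ?_
    · have h1 := Finset.card_le_card (hASbd n)
      have h2 := Finset.card_union_le (lBd (F k) (F n)) (rBd (F k) (F n))
      have hb : (((filt (F n) (Z k)) \
          (filt (F n) (leftInterior (↑(F k)) (↑(F n)) ∩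
            rightInterior ((↑(F k) : Set Γ))⁻¹ (↑(F n)) ∩ Z k))).card : ℝ) ≤
          ((lBd (F k) (F n)).card : ℝ) + ((rBd (F k) (F n)).card : ℝ) := by
        exact_mod_cast h1.trans h2
      calc (((filt (F n) (Z k)) \
          (filt (F n) (leftInterior (↑(F k)) (↑(F n)) ∩
            rightInterior ((↑(F k) : Set Γ))⁻¹ (↑(F n)) ∩ Z k))).card : ℝ) / ((F n).card : ℝ)
          ≤ (((lBd (F k) (F n)).card : ℝ) + ((rBd (F k) (F n)).card : ℝ)) / ((F n).card : ℝ) :=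
            (div_le_div_iff_of_pos_right (hFc n)).mpr hb
        _ = ((lBd (F k) (F n)).card : ℝ) / ((F n).card : ℝ) +
            ((rBd (F k) (F n)).card : ℝ) / ((F n).card : ℝ) := add_div _ _ _
    · simpa using hβ.add hγ
  have hs' : Tendsto (fun n => ((filt (F n) (leftInterior (↑(F k)) (↑(F n)) ∩
      rightInterior ((↑(F k) : Set Γ))⁻¹ (↑(F n)) ∩ Z k)).card : ℝ) / ((F n).card : ℝ))
      atTop (𝓝 (((F k).card : ℝ))⁻¹) := by
    refine ratio_close hFc (fun n => ?_) hr hδ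
    rw [abs_sub_comm, abs_of_nonneg
      (sub_nonneg.2 (by exact_mod_cast Finset.card_le_card (hSfsub n)))]
    have hsplit : (filt (F n) (Z k)).card = (filt (F n) (leftInterior (↑(F k)) (↑(F n)) ∩
        rightInterior ((↑(F k) : Set Γ))⁻¹ (↑(F n)) ∩ Z k)).card + ((filt (F n) (Z k)) \
        (filt (F n) (leftInterior (↑(F k)) (↑(F n)) ∩
          rightInterior ((↑(F k) : Set Γ))⁻¹ (↑(F n)) ∩ Z k))).card := by
      rw [add_comm, Finset.card_sdiff_add_card_eq_card (hSfsub n)]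
    rw [hsplit]
    push_cast
    simp
    -- eventual nonemptiness
  have hposA : ∀ᶠ n in atTop, 0 < ((filt (F n) (Z k)).card : ℝ) / ((F n).card : ℝ) :=
    hr.eventually (eventually_gt_nhds (by positivity))
  have hevA : ∀ᶠ n in atTop, ((↑(F n) : Set Γ) ∩ Z k).Nonempty := by
    refine hposA.mono fun n hn => ?_
    have hne : (filt (F n) (Z k)).Nonempty := by
      rw [← Finset.card_pos]
      by_contra hc
      push_neg at hc
      have h0 : (filt (F n) (Z k)).card = 0 := Nat.le_zero.mp hc
      rw [h0] at hn
      simp at hn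
    obtain ⟨z, hz⟩ := hne
    obtain ⟨h1, h2⟩ := mem_filt.1 hz
    exact ⟨z, Finset.mem_coe.2 h1, h2⟩
  have hposS : ∀ᶠ n in atTop, 0 < ((filt (F n) (leftInterior (↑(F k)) (↑(F n)) ∩
      rightInterior ((↑(F k) : Set Γ))⁻¹ (↑(F n)) ∩ Z k)).card : ℝ) / ((F n).card : ℝ) :=
    hs'.eventually (eventually_gt_nhds (by positivity))
  have hevS : ∀ᶠ n in atTop, (leftInterior (↑(F k)) (↑(F n)) ∩
      rightInterior ((↑(F k) : Set Γ))⁻¹ (↑(F n)) ∩ Z k).Nonempty := by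
    refine hposS.mono fun n hn => ?_
    have hne : (filt (F n) (leftInterior (↑(F k)) (↑(F n)) ∩
        rightInterior ((↑(F k) : Set Γ))⁻¹ (↑(F n)) ∩ Z k)).Nonempty := by
      rw [← Finset.card_pos]
      by_contra hc
      push_neg at hc
      have h0 : (filt (F n) (leftInterior (↑(F k)) (↑(F n)) ∩
          rightInterior ((↑(F k) : Set Γ))⁻¹ (↑(F n)) ∩ Z k)).card = 0 := Nat.le_zero.mp hc
      rw [h0] at hn
      simp at hn
    obtain ⟨z, hz⟩ := hne
    exact ⟨z, (mem_filt.1 hz).2⟩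
  -- Nat.card identifications
  have hNA : ∀ n, (Nat.card ↥((↑(F n) : Set Γ) ∩ Z k)) = (filt (F n) (Z k)).card := by
    intro n
    rw [← coe_filt, Nat.card_coe_set_eq, Set.ncard_coe_finset]
  have hNS : ∀ n, (Nat.card ↥(leftInterior (↑(F k)) (↑(F n)) ∩
      rightInterior ((↑(F k) : Set Γ))⁻¹ (↑(F n)) ∩ Z k)) =
      (filt (F n) (leftInterior (↑(F k)) (↑(F n)) ∩
        rightInterior ((↑(F k) : Set Γ))⁻¹ (↑(F n)) ∩ Z k)).card := by
    intro n
    conv_lhs => rw [← hScoe n]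
    rw [Nat.card_coe_set_eq, Set.ncard_coe_finset]
  -- the a.e. part
  filter_upwards [hgood k f hf ⟨M, hM⟩] with ω hω
  obtain ⟨l, hl⟩ := hω
  have hsumA : ∀ n, (∑ g ∈ F n, Set.indicator (Z k) (1 : Γ → ℝ) g * f (g • ω)) =
      ∑ g ∈ filt (F n) (Z k), f (g • ω) := by
    intro n
    simp only [filt]
    rw [Finset.sum_filter]
    refine Finset.sum_congr rfl fun g _ => ?_
    by_cases h : g ∈ Z k <;> simp [Set.indicator_apply, h]
  have hsumS : ∀ n, (∑ g ∈ F n, Set.indicator (leftInterior (↑(F k)) (↑(F n)) ∩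
      rightInterior ((↑(F k) : Set Γ))⁻¹ (↑(F n)) ∩ Z k) (1 : Γ → ℝ) g * f (g • ω)) =
      ∑ g ∈ filt (F n) (leftInterior (↑(F k)) (↑(F n)) ∩
        rightInterior ((↑(F k) : Set Γ))⁻¹ (↑(F n)) ∩ Z k), f (g • ω) := by
    intro n
    simp only [filt]
    rw [Finset.sum_filter]
    refine Finset.sum_congr rfl fun g _ => ?_
    by_cases h : g ∈ leftInterior (↑(F k)) (↑(F n)) ∩
        rightInterior ((↑(F k) : Set Γ))⁻¹ (↑(F n)) ∩ Z k <;>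
      simp [Set.indicator_apply, h]
  refine ⟨((F k).card : ℝ) * l, hl.const_mul _, ⟨hevA, ?_⟩, hevS, ?_⟩
  · -- second limit
    have h2' : Tendsto (fun n => (((filt (F n) (Z k)).card : ℝ) / ((F n).card : ℝ))⁻¹ *
        (((F n).card : ℝ)⁻¹ * ∑ g ∈ F n, Set.indicator (Z k) 1 g * f (g • ω))) atTop
        (𝓝 ((((F k).card : ℝ))⁻¹⁻¹ * l)) :=
      (hr.inv₀ (by positivity)).mul hl
    rw [inv_inv] at h2'
    refine h2'.congr fun n => ?_
    rw [hNA n, inv_div]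
    calc ((F n).card : ℝ) / ((filt (F n) (Z k)).card : ℝ) *
          (((F n).card : ℝ)⁻¹ * ∑ g ∈ F n, Set.indicator (Z k) 1 g * f (g • ω))
        = (((F n).card : ℝ) * ((F n).card : ℝ)⁻¹) *
          ((((filt (F n) (Z k)).card : ℝ))⁻¹ *
            ∑ g ∈ F n, Set.indicator (Z k) 1 g * f (g • ω)) := by
          rw [div_eq_mul_inv]; ring
      _ = (((filt (F n) (Z k)).card : ℝ))⁻¹ *
            ∑ g ∈ F n, Set.indicator (Z k) 1 g * f (g • ω) := by
          rw [mul_inv_cancel₀ (hFc n).ne', one_mul]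
  · -- third limit
    have hA2 : Tendsto (fun n => ((F n).card : ℝ)⁻¹ * ∑ g ∈ filt (F n) (Z k), f (g • ω))
        atTop (𝓝 l) := hl.congr fun n => by rw [hsumA n]
    have hdiff : ∀ n, |(((F n).card : ℝ)⁻¹ * ∑ g ∈ filt (F n) (Z k), f (g • ω)) -
        (((F n).card : ℝ)⁻¹ * ∑ g ∈ filt (F n) (leftInterior (↑(F k)) (↑(F n)) ∩
          rightInterior ((↑(F k) : Set Γ))⁻¹ (↑(F n)) ∩ Z k), f (g • ω))| ≤
        ((((filt (F n) (Z k)) \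
          (filt (F n) (leftInterior (↑(F k)) (↑(F n)) ∩
            rightInterior ((↑(F k) : Set Γ))⁻¹ (↑(F n)) ∩ Z k))).card : ℝ) /
          ((F n).card : ℝ)) * M := by
      intro n
      rw [← mul_sub]
      have hsd : (∑ g ∈ filt (F n) (Z k), f (g • ω)) -
          (∑ g ∈ filt (F n) (leftInterior (↑(F k)) (↑(F n)) ∩
            rightInterior ((↑(F k) : Set Γ))⁻¹ (↑(F n)) ∩ Z k), f (g • ω)) =
          ∑ g ∈ (filt (F n) (Z k)) \
            (filt (F n) (leftInterior (↑(F k)) (↑(F n)) ∩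
              rightInterior ((↑(F k) : Set Γ))⁻¹ (↑(F n)) ∩ Z k)), f (g • ω) := by
        have := Finset.sum_sdiff (f := fun g => f (g • ω)) (hSfsub n)
        linarith
      rw [hsd, abs_mul, abs_inv, abs_of_pos (hFc n)]
      have hbound : |∑ g ∈ (filt (F n) (Z k)) \
          (filt (F n) (leftInterior (↑(F k)) (↑(F n)) ∩
            rightInterior ((↑(F k) : Set Γ))⁻¹ (↑(F n)) ∩ Z k)), f (g • ω)| ≤
          (((filt (F n) (Z k)) \
            (filt (F n) (leftInterior (↑(F k)) (↑(F n)) ∩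
              rightInterior ((↑(F k) : Set Γ))⁻¹ (↑(F n)) ∩ Z k))).card : ℝ) * M := by
        calc |∑ g ∈ (filt (F n) (Z k)) \
            (filt (F n) (leftInterior (↑(F k)) (↑(F n)) ∩
              rightInterior ((↑(F k) : Set Γ))⁻¹ (↑(F n)) ∩ Z k)), f (g • ω)|
            ≤ ∑ g ∈ (filt (F n) (Z k)) \
              (filt (F n) (leftInterior (↑(F k)) (↑(F n)) ∩
                rightInterior ((↑(F k) : Set Γ))⁻¹ (↑(F n)) ∩ Z k)), |f (g • ω)| :=
              Finset.abs_sum_le_sum_abs _ _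
          _ ≤ ∑ g ∈ (filt (F n) (Z k)) \
              (filt (F n) (leftInterior (↑(F k)) (↑(F n)) ∩
                rightInterior ((↑(F k) : Set Γ))⁻¹ (↑(F n)) ∩ Z k)), M :=
              Finset.sum_le_sum fun g _ => hM _
          _ = _ := by rw [Finset.sum_const, nsmul_eq_mul]
      calc ((F n).card : ℝ)⁻¹ * |∑ g ∈ (filt (F n) (Z k)) \
            (filt (F n) (leftInterior (↑(F k)) (↑(F n)) ∩
              rightInterior ((↑(F k) : Set Γ))⁻¹ (↑(F n)) ∩ Z k)), f (g • ω)|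
          ≤ ((F n).card : ℝ)⁻¹ * (((((filt (F n) (Z k)) \
            (filt (F n) (leftInterior (↑(F k)) (↑(F n)) ∩
              rightInterior ((↑(F k) : Set Γ))⁻¹ (↑(F n)) ∩ Z k))).card : ℝ)) * M) :=
            mul_le_mul_of_nonneg_left hbound (by positivity)
        _ = ((((filt (F n) (Z k)) \
            (filt (F n) (leftInterior (↑(F k)) (↑(F n)) ∩
              rightInterior ((↑(F k) : Set Γ))⁻¹ (↑(F n)) ∩ Z k))).card : ℝ) /
            ((F n).card : ℝ)) * M := by
            rw [div_eq_mul_inv]; ring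
    have h0 : Tendsto (fun n => (((F n).card : ℝ)⁻¹ * ∑ g ∈ filt (F n) (Z k), f (g • ω)) -
        (((F n).card : ℝ)⁻¹ * ∑ g ∈ filt (F n) (leftInterior (↑(F k)) (↑(F n)) ∩
          rightInterior ((↑(F k) : Set Γ))⁻¹ (↑(F n)) ∩ Z k), f (g • ω))) atTop (𝓝 0) := by
      refine squeeze_zero_norm hdiff ?_
      simpa using hδ.mul_const M
    have hw : Tendsto (fun n => ((F n).card : ℝ)⁻¹ *
        ∑ g ∈ filt (F n) (leftInterior (↑(F k)) (↑(F n)) ∩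
          rightInterior ((↑(F k) : Set Γ))⁻¹ (↑(F n)) ∩ Z k), f (g • ω)) atTop (𝓝 l) := by
      have h1 := hA2.sub h0
      rw [sub_zero] at h1
      exact h1.congr fun n => sub_sub_cancel _ _
    have h3' := (hs'.inv₀ (by positivity)).mul hw
    rw [inv_inv] at h3'
    refine h3'.congr fun n => ?_
    rw [hNS n, hsumS n, inv_div]
    calc ((F n).card : ℝ) / ((filt (F n) (leftInterior (↑(F k)) (↑(F n)) ∩
          rightInterior ((↑(F k) : Set Γ))⁻¹ (↑(F n)) ∩ Z k)).card : ℝ) *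
          (((F n).card : ℝ)⁻¹ * ∑ g ∈ filt (F n) (leftInterior (↑(F k)) (↑(F n)) ∩
            rightInterior ((↑(F k) : Set Γ))⁻¹ (↑(F n)) ∩ Z k), f (g • ω))
        = (((F n).card : ℝ) * ((F n).card : ℝ)⁻¹) *
          (((filt (F n) (leftInterior (↑(F k)) (↑(F n)) ∩
            rightInterior ((↑(F k) : Set Γ))⁻¹ (↑(F n)) ∩ Z k)).card : ℝ)⁻¹ *
            ∑ g ∈ filt (F n) (leftInterior (↑(F k)) (↑(F n)) ∩
              rightInterior ((↑(F k) : Set Γ))⁻¹ (↑(F n)) ∩ Z k), f (g • ω)) := by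
          rw [div_eq_mul_inv]; ring
      _ = ((filt (F n) (leftInterior (↑(F k)) (↑(F n)) ∩
            rightInterior ((↑(F k) : Set Γ))⁻¹ (↑(F n)) ∩ Z k)).card : ℝ)⁻¹ *
            ∑ g ∈ filt (F n) (leftInterior (↑(F k)) (↑(F n)) ∩
              rightInterior ((↑(F k) : Set Γ))⁻¹ (↑(F n)) ∩ Z k), f (g • ω) := by
          rw [mul_inv_cancel₀ (hFc n).ne', one_mul]
end

section
/- Let (Γ, ι) be a computable group and ([F_n, Z_n])_{n≥1} a sequence of left monotilings of Γ such that (F_n) is a canonically computable sequence of finite sets and e ∈ F_n for all n ≥ 1. Then the following are equivalent: (i) there is a total computable function φ : ℕ² → Γ such that Z_n = {φ(n,1), φ(n,2), …} for every n ≥ 1; (ii) the sequence of sets (Z_n)_{n≥1} is computable, i.e. the map (n, g) ↦ 1_{Z_n}(g) is computable. -/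
open scoped Pointwise
open Filter Topology

/-- `(ι : Γ → ℕ)` is an admissible indexing: it is injective with computable (decidable)
range, and multiplication, transported along `ι`, is computable. -/
def IsComputableGroup {Γ : Type*} [Group Γ] (ι : Γ → ℕ) : Prop :=
  Function.Injective ι ∧
    (∃ χ : ℕ → Bool, Computable χ ∧ ∀ m, χ m = true ↔ m ∈ Set.range ι) ∧
    ∃ m : ℕ → ℕ → ℕ, Computable₂ m ∧ ∀ a b : Γ, m (ι a) (ι b) = ι (a * b)

/-- A sequence of finite subsets of `Γ` is canonically computable w.r.t. the indexing `ι`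
if the map sending `n` to the canonical index `∑_{x ∈ ι(F n)} 2^x` is computable. -/
def CanonicallyComputable {Γ : Type*} (ι : Γ → ℕ) (F : ℕ → Finset Γ) : Prop :=
  Computable fun n => ∑ x ∈ (F n).image ι, 2 ^ x

/-
(ii) ⇒ (i): each `Z n` is nonempty, and a nonempty decidable set of codes is enumerated by
sending `i` to `i` if `i` is a code of a centre and to the least such code otherwise.

(i) ⇒ (ii): given `g`, search for `f ∈ F n` (read off the binary digits of the canonical index)
and an enumerated centre `z` with `g = f * z`; the search terminates because the translates
`F n * z` cover `Γ`. As `1 ∈ F n` and the decomposition is unique, `g ∈ Z n` iff `z = g`.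
-/
theorem Nat.testBit_sum_two_pow (s : Finset ℕ) (k : ℕ) :
    (∑ i ∈ s, 2 ^ i).testBit k = true ↔ k ∈ s := by
  rw [← Nat.mem_bitIndices, ← List.mem_toFinset, Finset.toFinset_bitIndices_sum_two_pow]

theorem Primrec.nat_testBit : Primrec₂ Nat.testBit := by
  have hpow : Primrec₂ ((· ^ ·) : ℕ → ℕ → ℕ) := Primrec₂.unpaired'.1 Nat.Primrec.pow
  refine (Primrec.eq.comp (nat_mod.comp (nat_div.comp fst (hpow.comp (const 2) snd)) (const 2))
    (const 1)).decide.of_eq fun p => ?_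
  exact Nat.testBit_eq_decide_div_mod_eq.symm

theorem Computable₂.computablePred {α : Type*} [Primcodable α] {p : α → ℕ → Bool}
    (hp : Computable₂ p) : ComputablePred fun q : α × ℕ => p q.1 q.2 = true :=
  ⟨inferInstance, Computable.of_eq hp fun _ => Bool.decide_eq_true.symm⟩

theorem Computable₂.exists_enumeration {α : Type*} [Primcodable α] {p : α → ℕ → Bool}
    (hp : Computable₂ p) (hne : ∀ a, ∃ k, p a k = true) :
    ∃ ψ : α → ℕ → ℕ, Computable₂ ψ ∧ ∀ a, Set.range (ψ a) = {k | p a k = true} := by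
  have hfind := Computable.find hp.computablePred hne
  refine ⟨fun a i => cond (p a i) i (Nat.find (hne a)),
    Computable.cond hp Computable.snd (hfind.comp Computable.fst), fun a => ?_⟩
  ext k
  constructor
  · rintro ⟨i, rfl⟩
    cases h : p a i
    · simpa [h] using Nat.find_spec (hne a)
    · simp [h]
  · exact fun hk => ⟨k, by simp_all⟩

theorem CanonicallyComputable.exists_computable₂_mem {Γ : Type*} {ι : Γ → ℕ}
    {F : ℕ → Finset Γ} (hF : CanonicallyComputable ι F) :
    ∃ b : ℕ → ℕ → Bool, Computable₂ b ∧ ∀ n a, b n a = true ↔ a ∈ (F n).image ι :=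
  ⟨fun n a => (∑ x ∈ (F n).image ι, 2 ^ x).testBit a,
    (Primrec.nat_testBit.to_comp.comp (hF.comp Computable.fst) Computable.snd).to₂,
    fun _ _ => Nat.testBit_sum_two_pow _ _⟩

namespace IsLeftMonotiling

variable {Γ : Type*} [Group Γ] {F Z : Set Γ}

theorem exists_mem_mul (h : IsLeftMonotiling F Z) (g : Γ) : ∃ f ∈ F, ∃ z ∈ Z, g = f * z := by
  obtain ⟨⟨f, z⟩, ⟨hf, hz, rfl⟩, -⟩ := h g
  exact ⟨f, hf, z, hz, rfl⟩

theorem nonempty (h : IsLeftMonotiling F Z) : Z.Nonempty := by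
  obtain ⟨-, -, z, hz, -⟩ := h.exists_mem_mul 1
  exact ⟨z, hz⟩

theorem mem_iff_eq (h : IsLeftMonotiling F Z) (h1 : (1 : Γ) ∈ F) {f z g : Γ} (hf : f ∈ F)
    (hz : z ∈ Z) (hg : g = f * z) : g ∈ Z ↔ z = g :=
  ⟨fun hgZ => congrArg Prod.snd <| (h g).unique (y₁ := (f, z)) (y₂ := (1, g)) ⟨hf, hz, hg⟩
    ⟨h1, hgZ, (one_mul g).symm⟩, fun hzg => hzg ▸ hz⟩

end IsLeftMonotiling

namespace IsComputableGroup

variable {Γ : Type*} [Group Γ] {ι : Γ → ℕ} {α : Type*} [Primcodable α]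

theorem exists_computable₂_mem_image (hι : IsComputableGroup ι) {S : α → Set Γ}
    {χ : α → ℕ → Bool} (hχ : Computable₂ χ) (hχS : ∀ a g, χ a (ι g) = true ↔ g ∈ S a) :
    ∃ χ' : α → ℕ → Bool, Computable₂ χ' ∧ ∀ a k, χ' a k = true ↔ k ∈ ι '' S a := by
  obtain ⟨-, ⟨χR, hχR, hχRι⟩, -⟩ := hι
  refine ⟨fun a k => χR k && χ a k,
    Primrec.and.to_comp.comp (hχR.comp Computable.snd) hχ, fun a k => ?_⟩
  rw [Bool.and_eq_true, hχRι]
  constructor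
  · rintro ⟨⟨g, rfl⟩, hg⟩
    exact ⟨g, (hχS a g).1 hg, rfl⟩
  · rintro ⟨g, hg, rfl⟩
    exact ⟨⟨g, rfl⟩, (hχS a g).2 hg⟩

theorem exists_computable₂_enumeration (hι : IsComputableGroup ι) {S : α → Set Γ}
    (hS : ∀ a, (S a).Nonempty) {χ : α → ℕ → Bool} (hχ : Computable₂ χ)
    (hχS : ∀ a g, χ a (ι g) = true ↔ g ∈ S a) :
    ∃ ψ : α → ℕ → ℕ, Computable₂ ψ ∧ ∀ a, ι '' S a = Set.range (ψ a) := by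
  obtain ⟨χ', hχ', hχ'S⟩ := hι.exists_computable₂_mem_image hχ hχS
  have hne : ∀ a, ∃ k, χ' a k = true := fun a =>
    ⟨ι (hS a).some, (hχ'S a _).2 (Set.mem_image_of_mem ι (hS a).some_mem)⟩
  obtain ⟨ψ, hψ, hψS⟩ := hχ'.exists_enumeration hne
  refine ⟨ψ, hψ, fun a => ?_⟩
  rw [hψS]
  ext k
  exact (hχ'S a k).symm

open Computable in
theorem exists_computable₂_mem_of_enumeration (hι : IsComputableGroup ι)
    {F : ℕ → Finset Γ} {Z : ℕ → Set Γ} (htile : ∀ n, IsLeftMonotiling (↑(F n)) (Z n))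
    (hF : CanonicallyComputable ι F) (h1 : ∀ n, (1 : Γ) ∈ F n) {ψ : ℕ → ℕ → ℕ}
    (hψ : Computable₂ ψ) (hψZ : ∀ n, ι '' Z n = Set.range (ψ n)) :
    ∃ χ : ℕ → ℕ → Bool, Computable₂ χ ∧ ∀ n g, χ n (ι g) = true ↔ g ∈ Z n := by
  obtain ⟨hinj, ⟨χR, hχR, hχRι⟩, m, hm, hmι⟩ := hι
  obtain ⟨b, hb, hbF⟩ := hF.exists_computable₂_mem
  -- search for `j = pair (ι f) i` with `f ∈ F n` and `k = ι (f * z)`, where `ι z = ψ n i`;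
  -- the search succeeds at once when `k` is not a code
  let q : ℕ × ℕ → ℕ → Bool := fun p j =>
    !χR p.2 || (b p.1 j.unpair.1 && decide (m j.unpair.1 (ψ p.1 j.unpair.2) = p.2))
  have hq : Computable₂ q := by
    have hj₁ : Computable fun x : (ℕ × ℕ) × ℕ => x.2.unpair.1 := fst.comp (unpair.comp snd)
    have hj₂ : Computable fun x : (ℕ × ℕ) × ℕ => x.2.unpair.2 := snd.comp (unpair.comp snd)
    exact (Primrec.or.to_comp.comp (Primrec.not.to_comp.comp (hχR.comp (snd.comp fst)))
      (Primrec.and.to_comp.comp (hb.comp (fst.comp fst) hj₁)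
        (Primrec.eq.decide.to_comp.comp (hm.comp hj₁ (hψ.comp (fst.comp fst) hj₂))
          (snd.comp fst)))).to₂
  have hex : ∀ p, ∃ j, q p j = true := by
    rintro ⟨n, k⟩
    cases hk : χR k
    · exact ⟨0, by simp [q, hk]⟩
    · obtain ⟨g, rfl⟩ := (hχRι k).1 hk
      obtain ⟨f, hf, z, hz, rfl⟩ := (htile n).exists_mem_mul g
      obtain ⟨i, hi⟩ : ι z ∈ Set.range (ψ n) := hψZ n ▸ Set.mem_image_of_mem ι hz
      refine ⟨Nat.pair (ι f) i, ?_⟩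
      simpa [q, hbF, hi, hmι] using Or.inr ⟨f, hf, rfl⟩
  refine ⟨fun n k => decide (ψ n (Nat.find (hex (n, k))).unpair.2 = k), ?_, fun n g => ?_⟩
  · have hfind := Computable.find hq.computablePred hex
    exact (Primrec.eq.decide.to_comp.comp (hψ.comp fst (snd.comp (unpair.comp hfind))) snd).to₂
  · have hj := Nat.find_spec (hex (n, ι g))
    set j := Nat.find (hex (n, ι g))
    simp only [q, (hχRι _).2 ⟨g, rfl⟩, Bool.not_true, Bool.false_or, Bool.and_eq_true,
      hbF, decide_eq_true_eq, Finset.mem_image] at hj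
    obtain ⟨⟨f, hf, hfj⟩, hmj⟩ := hj
    obtain ⟨z, hz, hzj⟩ : ψ n j.unpair.2 ∈ ι '' Z n := hψZ n ▸ Set.mem_range_self _
    have hg : g = f * z := hinj (by rw [← hmι, hfj, hzj, hmj])
    rw [decide_eq_true_iff, ← hzj, hinj.eq_iff, (htile n).mem_iff_eq (h1 n) hf hz hg]

end IsComputableGroup

theorem stmt5_general {Γ : Type*} [Group Γ]
    (ι : Γ → ℕ) (hcg : IsComputableGroup ι)
    (F : ℕ → Finset Γ) (Z : ℕ → Set Γ)
    (htile : ∀ n, IsLeftMonotiling (↑(F n)) (Z n))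
    (hcc : CanonicallyComputable ι F)
    (he : ∀ n, (1 : Γ) ∈ F n) :
    (∃ φ : ℕ → ℕ → ℕ, Computable₂ φ ∧
        ∀ n, ι '' Z n = Set.range fun i : ℕ => φ n (i + 1)) ↔
      ∃ χ : ℕ → ℕ → Bool, Computable₂ χ ∧
        ∀ (n : ℕ) (g : Γ), χ n (ι g) = true ↔ g ∈ Z n := by
  constructor
  · rintro ⟨φ, hφ, hφZ⟩
    exact hcg.exists_computable₂_mem_of_enumeration htile hcc he
      (hφ.comp Computable.fst (Computable.succ.comp Computable.snd)).to₂ hφZ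
  · rintro ⟨χ, hχ, hχZ⟩
    obtain ⟨ψ, hψ, hψZ⟩ :=
      hcg.exists_computable₂_enumeration (fun n => (htile n).nonempty) hχ hχZ
    refine ⟨fun n i => ψ n (i - 1), ?_, fun n => by simpa using hψZ n⟩
    exact (hψ.comp Computable.fst
      (Primrec.nat_sub.to_comp.comp Computable.snd (Computable.const 1))).to₂

theorem stmt5 {Γ : Type*} [Group Γ] [Countable Γ] [Infinite Γ] [DecidableEq Γ]
    (ι : Γ → ℕ) (hcg : IsComputableGroup ι)
    (F : ℕ → Finset Γ) (Z : ℕ → Set Γ)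
    (htile : ∀ n, IsLeftMonotiling (↑(F n)) (Z n))
    (hcc : CanonicallyComputable ι F)
    (he : ∀ n, (1 : Γ) ∈ F n) :
    (∃ φ : ℕ → ℕ → ℕ, Computable₂ φ ∧
        ∀ n, ι '' Z n = Set.range fun i : ℕ => φ n (i + 1)) ↔
      ∃ χ : ℕ → ℕ → Bool, Computable₂ χ ∧
        ∀ (n : ℕ) (g : Γ), χ n (ι g) = true ↔ g ∈ Z n :=
  stmt5_general ι hcg F Z htile hcc he
end

section
/- Let Γ be a countably infinite group and ([F_n, Z_n])_{n≥1} a symmetric left Følner monotiling of Γ with e ∈ F_n for every n, such that (F_n) is a tempered two-sided Følner sequence. Let (X, μ, Γ) be an ergodic measure-preserving system such that for every k ≥ 1 the indicator 1_{Z_k} is a good weight for X along (F_n). For each k ≥ 1 let β_k = {B^k_1, …, B^k_{M_k}} be a finite measurable partition of X. Then for μ-a.e. ω ∈ X, for all k ≥ 1, all m ∈ {1,…,M_k} and all h ∈ Γ, the two limits lim_{n→∞} (1/|F_n ∩ Z_k|) ∑_{g∈F_n∩Z_k} 1_{B^k_m}((gh)·ω) and lim_{n→∞} (1/|Int_{F_k}(F_n)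 ∩ Int^r_{F_k⁻¹}(F_n) ∩ Z_k|) ∑_{g∈Int_{F_k}(F_n) ∩ Int^r_{F_k⁻¹}(F_n) ∩ Z_k} 1_{B^k_m}((gh)·ω) exist and are equal; their common value is denoted π^{k,h}_m(ω). -/
open scoped Pointwise
open Filter Topology MeasureTheory

lemma auxNatCard {Γ : Type*} [DecidableEq Γ] (s : Finset Γ) (t : Set Γ) (hts : t ⊆ ↑s)
    [DecidablePred (· ∈ t)] :
    Nat.card ↥t = (s.filter (· ∈ t)).card := by
  have h : t = ↑(s.filter (· ∈ t)) := by
    ext x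
    simp only [Finset.coe_filter, Set.mem_setOf_eq]
    exact ⟨fun hx => ⟨hts hx, hx⟩, fun hx => hx.2⟩
  calc Nat.card ↥t = t.ncard := Nat.card_coe_set_eq t
    _ = (↑(s.filter (· ∈ t)) : Set Γ).ncard := by rw [← h]
    _ = (s.filter (· ∈ t)).card := Set.ncard_coe_finset _

lemma auxSumIndicator {Γ : Type*} [DecidableEq Γ] (s : Finset Γ) (t : Set Γ)
    [DecidablePred (· ∈ t)] (v : Γ → ℝ) :
    ∑ g ∈ s, Set.indicator t (1 : Γ → ℝ) g * v g = ∑ g ∈ s.filter (· ∈ t), v g := by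
  rw [Finset.sum_filter]
  refine Finset.sum_congr rfl fun g _ => ?_
  by_cases hg : g ∈ t <;> simp [Set.indicator_apply, hg]

lemma auxRatio {u N c : ℕ → ℝ} (hc : ∀ n, 0 < c n) {L d : ℝ} (hd : 0 < d)
    (h1 : Tendsto (fun n => (c n)⁻¹ * u n) atTop (𝓝 L))
    (h2 : Tendsto (fun n => N n / c n) atTop (𝓝 d)) :
    Tendsto (fun n => (N n)⁻¹ * u n) atTop (𝓝 (L / d)) := by
  have h3 := h1.div h2 hd.ne'
  refine h3.congr' ?_
  filter_upwards [h2.eventually (eventually_gt_nhds hd)] with n hn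
  have hN : 0 < N n := by
    by_contra hcon
    push_neg at hcon
    have : N n / c n ≤ 0 := div_nonpos_of_nonpos_of_nonneg hcon (hc n).le
    linarith
  simp only [Pi.div_apply]
  field_simp [hN.ne', (hc n).ne']

lemma auxBoundary {Γ : Type*} [Group Γ] [DecidableEq Γ] (F : ℕ → Finset Γ)
    (hFl : IsLeftFolner F) (hFr : IsRightFolner F) (Fk : Finset Γ) (bd : ℕ → Finset Γ)
    (hbd : ∀ n, ∀ g ∈ bd n, g ∈ F n ∧
      g ∉ leftInterior (↑Fk : Set Γ) ↑(F n) ∩ rightInterior ((↑Fk : Set Γ))⁻¹ ↑(F n)) :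
    Tendsto (fun n => ((bd n).card : ℝ) / (F n).card) atTop (𝓝 0) := by
  classical
  have hFpos : ∀ n, (0:ℝ) < ((F n).card : ℝ) := fun n => by
    exact_mod_cast Finset.card_pos.mpr (hFl.1 n)
  have hsub : ∀ n, bd n ⊆
      (Fk.biUnion fun f => (F n).filter fun g => f * g ∉ F n) ∪
      (Fk.biUnion fun f => (F n).filter fun g => g * f⁻¹ ∉ F n) := by
    intro n g hg
    obtain ⟨hgF, hgS⟩ := hbd n g hg
    rw [Set.mem_inter_iff, not_and_or] at hgS
    rcases hgS with hL | hR
    · have hmem : g ∈ ((↑Fk : Set Γ)⁻¹ * ↑(F n)) ∩ ((↑Fk : Set Γ)⁻¹ * (↑(F n) : Set Γ)ᶜ) := by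
        by_contra hc
        exact hL ⟨Finset.mem_coe.mpr hgF, hc⟩
      obtain ⟨x, hx, y, hy, hxy⟩ := Set.mem_mul.mp hmem.2
      apply Finset.mem_union_left
      refine Finset.mem_biUnion.mpr ⟨x⁻¹, ?_, ?_⟩
      · simpa using hx
      · refine Finset.mem_filter.mpr ⟨hgF, ?_⟩
        have hxg : x⁻¹ * g = y := by rw [← hxy]; group
        rw [hxg]
        simpa using hy
    · have hmem : g ∈ ((↑(F n) : Set Γ) * ((↑Fk : Set Γ)⁻¹)⁻¹) ∩
          ((↑(F n) : Set Γ)ᶜ * ((↑Fk : Set Γ)⁻¹)⁻¹) := by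
        by_contra hc
        exact hR ⟨Finset.mem_coe.mpr hgF, hc⟩
      obtain ⟨y, hy, x, hx, hxy⟩ := Set.mem_mul.mp hmem.2
      apply Finset.mem_union_right
      refine Finset.mem_biUnion.mpr ⟨x, ?_, ?_⟩
      · simpa using hx
      · refine Finset.mem_filter.mpr ⟨hgF, ?_⟩
        have hgx : g * x⁻¹ = y := by rw [← hxy]; group
        rw [hgx]
        simpa using hy
  have hcardL : ∀ (f : Γ) (n : ℕ),
      ((F n).filter fun g => f * g ∉ F n).card ≤ (symmDiff (F n) ({f} * F n)).card := by
    intro f n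
    apply Finset.card_le_card_of_injOn (fun g => f * g)
    · intro g hg
      rw [Finset.mem_coe, Finset.mem_filter] at hg
      rw [Finset.mem_coe, Finset.mem_symmDiff]
      refine Or.inr ⟨?_, hg.2⟩
      exact Finset.mem_mul.mpr ⟨f, Finset.mem_singleton_self f, g, hg.1, rfl⟩
    · intro a _ b _ hab
      exact mul_left_cancel hab
  have hcardR : ∀ (f : Γ) (n : ℕ),
      ((F n).filter fun g => g * f⁻¹ ∉ F n).card ≤ (symmDiff (F n) (F n * {f⁻¹})).card := by
    intro f n
    apply Finset.card_le_card_of_injOn (fun g => g * f⁻¹)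
    · intro g hg
      rw [Finset.mem_coe, Finset.mem_filter] at hg
      rw [Finset.mem_coe, Finset.mem_symmDiff]
      refine Or.inr ⟨?_, hg.2⟩
      exact Finset.mem_mul.mpr ⟨g, hg.1, f⁻¹, Finset.mem_singleton_self _, rfl⟩
    · intro a _ b _ hab
      exact mul_right_cancel hab
  have hmaj : Tendsto (fun n =>
      (∑ f ∈ Fk, ((symmDiff (F n) ({f} * F n)).card : ℝ) / (F n).card) +
      (∑ f ∈ Fk, ((symmDiff (F n) (F n * {f⁻¹})).card : ℝ) / (F n).card)) atTop (𝓝 0) := by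
    have h1 : Tendsto (fun n => ∑ f ∈ Fk, ((symmDiff (F n) ({f} * F n)).card : ℝ) / (F n).card)
        atTop (𝓝 (∑ _f ∈ Fk, (0:ℝ))) :=
      tendsto_finset_sum Fk fun f _ => hFl.2 {f} (Finset.singleton_nonempty f)
    have h2 : Tendsto (fun n => ∑ f ∈ Fk, ((symmDiff (F n) (F n * {f⁻¹})).card : ℝ) / (F n).card)
        atTop (𝓝 (∑ _f ∈ Fk, (0:ℝ))) :=
      tendsto_finset_sum Fk fun f _ => hFr.2 {f⁻¹} (Finset.singleton_nonempty _)
    have := h1.add h2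
    simpa using this
  refine tendsto_of_tendsto_of_tendsto_of_le_of_le tendsto_const_nhds hmaj ?_ ?_
  · intro n
    positivity
  · intro n
    have hnat : (bd n).card ≤
        (∑ f ∈ Fk, (symmDiff (F n) ({f} * F n)).card) +
        (∑ f ∈ Fk, (symmDiff (F n) (F n * {f⁻¹})).card) := by
      calc (bd n).card ≤ ((Fk.biUnion fun f => (F n).filter fun g => f * g ∉ F n) ∪
            (Fk.biUnion fun f => (F n).filter fun g => g * f⁻¹ ∉ F n)).card :=
            Finset.card_le_card (hsub n)
        _ ≤ (Fk.biUnion fun f => (F n).filter fun g => f * g ∉ F n).card +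
            (Fk.biUnion fun f => (F n).filter fun g => g * f⁻¹ ∉ F n).card :=
            Finset.card_union_le _ _
        _ ≤ (∑ f ∈ Fk, ((F n).filter fun g => f * g ∉ F n).card) +
            (∑ f ∈ Fk, ((F n).filter fun g => g * f⁻¹ ∉ F n).card) :=
            add_le_add (Finset.card_biUnion_le) (Finset.card_biUnion_le)
        _ ≤ _ := add_le_add (Finset.sum_le_sum fun f _ => hcardL f n)
            (Finset.sum_le_sum fun f _ => hcardR f n)
    calc ((bd n).card : ℝ) / (F n).card
        ≤ (((∑ f ∈ Fk, (symmDiff (F n) ({f} * F n)).card) +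
            (∑ f ∈ Fk, (symmDiff (F n) (F n * {f⁻¹})).card) : ℕ) : ℝ) / (F n).card := by
          gcongr
      _ = _ := by
          push_cast [add_div, Finset.sum_div]
          try rfl

lemma auxDensity {Γ : Type*} [Group Γ] [DecidableEq Γ] (F : ℕ → Finset Γ)
    (hFl : IsLeftFolner F) (Z : Set Γ) [DecidablePred (· ∈ Z)] (Fk : Finset Γ)
    (htile : IsLeftMonotiling (↑Fk) Z) {d : ℝ}
    (hd : Tendsto (fun n => (((F n).filter (· ∈ Z)).card : ℝ) / (F n).card) atTop (𝓝 d)) :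
    0 < d := by
  classical
  have hFpos : ∀ n, (0:ℝ) < ((F n).card : ℝ) := fun n => by
    exact_mod_cast Finset.card_pos.mpr (hFl.1 n)
  have hFkne : Fk.Nonempty := by
    obtain ⟨p, hp, -⟩ := htile 1
    exact ⟨p.1, hp.1⟩
  have hFkpos : (0:ℝ) < (Fk.card : ℝ) := by exact_mod_cast Finset.card_pos.mpr hFkne
  have hφ : ∀ g : Γ, ∃ p : Γ × Γ, p.1 ∈ Fk ∧ p.2 ∈ Z ∧ g = p.1 * p.2 := fun g => (htile g).exists
  set φ : Γ → Γ × Γ := fun g => (hφ g).choose with hφdef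
  have hφ1 : ∀ g, (φ g).1 ∈ Fk := fun g => (hφ g).choose_spec.1
  have hφ2 : ∀ g, (φ g).2 ∈ Z := fun g => (hφ g).choose_spec.2.1
  have hφ3 : ∀ g, g = (φ g).1 * (φ g).2 := fun g => (hφ g).choose_spec.2.2
  have hkey : ∀ n, (F n).card ≤ Fk.card * ((Fk⁻¹ * F n).filter (· ∈ Z)).card := by
    intro n
    have := Finset.card_le_card_of_injOn φ (s := F n)
      (t := Fk ×ˢ ((Fk⁻¹ * F n).filter (· ∈ Z))) ?_ ?_
    · simpa [Finset.card_product] using this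
    · intro g hg
      refine Finset.mem_product.mpr ⟨hφ1 g, Finset.mem_filter.mpr ⟨?_, hφ2 g⟩⟩
      refine Finset.mem_mul.mpr ⟨(φ g).1⁻¹, ?_, g, hg, ?_⟩
      · simp [hφ1 g]
      · exact inv_mul_eq_iff_eq_mul.mpr (hφ3 g)
    · intro a _ b _ hab
      rw [hφ3 a, hφ3 b, hab]
  clear hφ3
  have hT : ∀ n, ((Fk⁻¹ * F n).filter (· ∈ Z)).card ≤
      ((F n).filter (· ∈ Z)).card + ((Fk⁻¹ * F n) \ F n).card := by
    intro n
    have hsub : (Fk⁻¹ * F n).filter (· ∈ Z) ⊆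
        ((F n).filter (· ∈ Z)) ∪ ((Fk⁻¹ * F n) \ F n) := by
      intro z hz
      rw [Finset.mem_filter] at hz
      by_cases hzF : z ∈ F n
      · exact Finset.mem_union_left _ (Finset.mem_filter.mpr ⟨hzF, hz.2⟩)
      · exact Finset.mem_union_right _ (Finset.mem_sdiff.mpr ⟨hz.1, hzF⟩)
    exact le_trans (Finset.card_le_card hsub) (Finset.card_union_le _ _)
  have hE : Tendsto (fun n => (((Fk⁻¹ * F n) \ F n).card : ℝ) / (F n).card) atTop (𝓝 0) := by
    refine tendsto_of_tendsto_of_tendsto_of_le_of_le tendsto_const_nhds (hFl.2 Fk⁻¹ hFkne.inv) ?_ ?_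
    · intro n; positivity
    · intro n
      rw [div_le_div_iff_of_pos_right (hFpos n)]
      have hsub2 : (Fk⁻¹ * F n) \ F n ⊆ symmDiff (F n) (Fk⁻¹ * F n) := by
        intro g hg
        rw [Finset.mem_sdiff] at hg
        exact Finset.mem_symmDiff.mpr (Or.inr ⟨hg.1, hg.2⟩)
      exact_mod_cast Finset.card_le_card hsub2
  have hlim : Tendsto (fun n => (((F n).filter (· ∈ Z)).card : ℝ) / (F n).card +
      (((Fk⁻¹ * F n) \ F n).card : ℝ) / (F n).card) atTop (𝓝 (d + 0)) := hd.add hE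
  have hge : (Fk.card : ℝ)⁻¹ ≤ d + 0 := by
    refine ge_of_tendsto hlim (Filter.Eventually.of_forall fun n => ?_)
    have h2 : ((F n).card : ℝ) / (Fk.card : ℝ) ≤
        (((F n).filter (· ∈ Z)).card : ℝ) + (((Fk⁻¹ * F n) \ F n).card : ℝ) := by
      rw [div_le_iff₀ hFkpos]
      have hmm := le_trans (hkey n) (Nat.mul_le_mul_left Fk.card (hT n))
      calc ((F n).card : ℝ) ≤ ((Fk.card * (((F n).filter (· ∈ Z)).card +
            ((Fk⁻¹ * F n) \ F n).card) : ℕ) : ℝ) := by exact_mod_cast hmm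
        _ = _ := by push_cast; ring
    calc (Fk.card : ℝ)⁻¹ = (((F n).card : ℝ) / Fk.card) / (F n).card := by
          field_simp
          exact (div_self (hFpos n).ne').symm
      _ ≤ ((((F n).filter (· ∈ Z)).card : ℝ) + (((Fk⁻¹ * F n) \ F n).card : ℝ)) / (F n).card := by
          gcongr
      _ = _ := add_div _ _ _
  have hpos : (0:ℝ) < (Fk.card : ℝ)⁻¹ := by positivity
  linarith

theorem stmt10 {Γ : Type*} [Group Γ] [Countable Γ] [Infinite Γ] [DecidableEq Γ]
    (F : ℕ → Finset Γ) (Z : ℕ → Set Γ)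
    (hFl : IsLeftFolner F) (hFr : IsRightFolner F) (htemp : IsTempered F)
    (htile : ∀ n, IsLeftMonotiling (↑(F n)) (Z n))
    (hsymm : ∀ n, (Z n)⁻¹ = Z n)
    (he : ∀ n, (1 : Γ) ∈ F n)
    {X : Type*} [MeasurableSpace X] [MulAction Γ X] (μ : Measure X)
    [IsProbabilityMeasure μ]
    (hmeas : ∀ g : Γ, Measurable fun x : X => g • x)
    (hmp : ∀ g : Γ, MeasurePreserving (fun x : X => g • x) μ μ)
    (herg : ∀ E : Set X, MeasurableSet E → (∀ g : Γ, (fun x : X => g • x) ⁻¹' E = E) →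
      μ E = 0 ∨ μ E = 1)
    (hgood : ∀ k, IsGoodWeight (Set.indicator (Z k) 1) F μ)
    (M : ℕ → ℕ) (B : (k : ℕ) → Fin (M k) → Set X)
    (hBmeas : ∀ k m, MeasurableSet (B k m))
    (hBdisj : ∀ k, Pairwise fun m m' => Disjoint (B k m) (B k m'))
    (hBcover : ∀ k, (⋃ m, B k m) = Set.univ) :
    ∀ᵐ ω ∂μ, ∀ (k : ℕ) (m : Fin (M k)) (h : Γ), ∃ L : ℝ,
      Tendsto
        (fun n => (Nat.card ↥((↑(F n) : Set Γ) ∩ Z k) : ℝ)⁻¹ *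
          ∑ g ∈ F n, Set.indicator (Z k) 1 g * Set.indicator (B k m) 1 ((g * h) • ω))
        atTop (𝓝 L) ∧
      Tendsto
        (fun n => (Nat.card
            ↥(leftInterior (↑(F k)) (↑(F n)) ∩
                rightInterior ((↑(F k) : Set Γ))⁻¹ (↑(F n)) ∩ Z k) : ℝ)⁻¹ *
          ∑ g ∈ F n,
            Set.indicator
              (leftInterior (↑(F k)) (↑(F n)) ∩
                rightInterior ((↑(F k) : Set Γ))⁻¹ (↑(F n)) ∩ Z k) 1 g *
              Set.indicator (B k m) 1 ((g * h) • ω))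
        atTop (𝓝 L) := by
  classical
  have hFpos : ∀ n, (0:ℝ) < ((F n).card : ℝ) := fun n => by
    exact_mod_cast Finset.card_pos.mpr (hFl.1 n)
  -- a.e. convergence of the weighted averages, uniformly in (k, m, h)
  have hkey : ∀ᵐ ω ∂μ, ∀ (k : ℕ) (m : Fin (M k)) (h : Γ), ∃ L0 : ℝ,
      Tendsto (fun n => ((F n).card : ℝ)⁻¹ *
        ∑ g ∈ F n, Set.indicator (Z k) 1 g * Set.indicator (B k m) 1 ((g * h) • ω))
        atTop (𝓝 L0) := by
    rw [ae_all_iff]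
    intro k
    rw [ae_all_iff]
    intro m
    rw [ae_all_iff]
    intro h
    have hf : Measurable (Set.indicator (B k m) (1 : X → ℝ)) :=
      measurable_const.indicator (hBmeas k m)
    have hb : ∃ Mb : ℝ, ∀ x, |Set.indicator (B k m) (1 : X → ℝ) x| ≤ Mb := by
      refine ⟨1, fun x => ?_⟩
      by_cases hx : x ∈ B k m <;> simp [Set.indicator_apply, hx]
    have h1 := hgood k _ hf hb
    have h2 : ∀ᵐ ω' ∂(Measure.map (fun x : X => h • x) μ), ∃ L0 : ℝ,
        Tendsto (fun n => ((F n).card : ℝ)⁻¹ *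
          ∑ g ∈ F n, Set.indicator (Z k) 1 g * Set.indicator (B k m) 1 (g • ω'))
          atTop (𝓝 L0) := by
      rwa [(hmp h).map_eq]
    have h3 := ae_of_ae_map (hmeas h).aemeasurable h2
    filter_upwards [h3] with ω hω
    simpa only [mul_smul] using hω
  -- existence and positivity of the density of Z k
  have hdens : ∀ k : ℕ, ∃ d : ℝ, 0 < d ∧
      Tendsto (fun n => ((((F n).filter (· ∈ Z k)).card : ℝ)) / (F n).card) atTop (𝓝 d) := by
    intro k
    have hb : ∃ Mb : ℝ, ∀ x : X, |(fun _ : X => (1:ℝ)) x| ≤ Mb := ⟨1, fun x => by norm_num⟩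
    have h1 := hgood k (fun _ => (1:ℝ)) measurable_const hb
    have hne : (ae μ).NeBot := ae_neBot.mpr (IsProbabilityMeasure.ne_zero μ)
    obtain ⟨ω, d, hd⟩ := h1.exists
    have heq : ∀ n, ((F n).card : ℝ)⁻¹ * ∑ g ∈ F n, Set.indicator (Z k) (1 : Γ → ℝ) g * 1
        = (((F n).filter (· ∈ Z k)).card : ℝ) / (F n).card := by
      intro n
      rw [auxSumIndicator (F n) (Z k) (fun _ => (1:ℝ))]
      rw [Finset.sum_const, nsmul_eq_mul, mul_one, inv_mul_eq_div]
    have hd' := hd.congr heq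
    exact ⟨d, auxDensity F hFl (Z k) (F k) (htile k) hd', hd'⟩
  filter_upwards [hkey] with ω hω k m h
  obtain ⟨L0, hL0⟩ := hω k m h
  obtain ⟨d, hdpos, hdlim⟩ := hdens k
  have hv0 : ∀ g : Γ, (0:ℝ) ≤ Set.indicator (B k m) 1 ((g * h) • ω) := fun g =>
    Set.indicator_nonneg (fun _ _ => zero_le_one) _
  have hv1 : ∀ g : Γ, Set.indicator (B k m) (1 : X → ℝ) ((g * h) • ω) ≤ 1 := fun g => by
    by_cases hx : (g * h) • ω ∈ B k m <;> simp [Set.indicator_apply, hx]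
  have hNc : ∀ n : ℕ, (Nat.card ↥((↑(F n) : Set Γ) ∩ Z k) : ℝ)
      = (((F n).filter (· ∈ Z k)).card : ℝ) := by
    intro n
    rw [auxNatCard (F n) ((↑(F n) : Set Γ) ∩ Z k) Set.inter_subset_left]
    have hfe : (F n).filter (· ∈ ((↑(F n) : Set Γ) ∩ Z k)) = (F n).filter (· ∈ Z k) := by
      ext x
      simp only [Finset.mem_filter, Set.mem_inter_iff, Finset.mem_coe]
      tauto
    rw [hfe]
  refine ⟨L0 / d, ?_, ?_⟩
  · refine (auxRatio hFpos hdpos hL0 hdlim).congr fun n => ?_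
    rw [hNc n]
  · -- the interior version
    set T : ℕ → Set Γ := fun n => leftInterior (↑(F k)) (↑(F n)) ∩
      rightInterior ((↑(F k) : Set Γ))⁻¹ (↑(F n)) ∩ Z k with hTdef
    set bdF : ℕ → Finset Γ := fun n => (F n).filter
      (fun g => g ∉ leftInterior (↑(F k) : Set Γ) ↑(F n) ∩
        rightInterior ((↑(F k) : Set Γ))⁻¹ ↑(F n)) with hbdFdef
    have hbdry : Tendsto (fun n => ((bdF n).card : ℝ) / (F n).card) atTop (𝓝 0) := by
      refine auxBoundary F hFl hFr (F k) bdF fun n g hg => ?_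
      rw [hbdFdef] at hg
      simpa using (Finset.mem_filter.mp hg)
    -- counting estimates
    have hsubTZ : ∀ n, (F n).filter (· ∈ T n) ⊆ (F n).filter (· ∈ Z k) := by
      intro n g hg
      rw [Finset.mem_filter] at hg ⊢
      exact ⟨hg.1, hg.2.2⟩
    have hsplit : ∀ n, (F n).filter (· ∈ Z k) ⊆ ((F n).filter (· ∈ T n)) ∪ bdF n := by
      intro n g hg
      rw [Finset.mem_filter] at hg
      by_cases hS : g ∈ leftInterior (↑(F k) : Set Γ) ↑(F n) ∩
          rightInterior ((↑(F k) : Set Γ))⁻¹ ↑(F n)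
      · exact Finset.mem_union_left _ (Finset.mem_filter.mpr ⟨hg.1, hS, hg.2⟩)
      · exact Finset.mem_union_right _ (Finset.mem_filter.mpr ⟨hg.1, hS⟩)
    have hcard1 : ∀ n, (((F n).filter (· ∈ T n)).card : ℝ) ≤ (((F n).filter (· ∈ Z k)).card : ℝ) := by
      intro n
      exact_mod_cast Finset.card_le_card (hsubTZ n)
    have hcard2 : ∀ n, (((F n).filter (· ∈ Z k)).card : ℝ)
        ≤ (((F n).filter (· ∈ T n)).card : ℝ) + ((bdF n).card : ℝ) := by
      intro n
      have := le_trans (Finset.card_le_card (hsplit n)) (Finset.card_union_le _ _)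
      exact_mod_cast this
    -- limit of the interior density
    have hN'lim : Tendsto (fun n => (((F n).filter (· ∈ T n)).card : ℝ) / (F n).card)
        atTop (𝓝 d) := by
      have hlow : Tendsto (fun n => (((F n).filter (· ∈ Z k)).card : ℝ) / (F n).card
          - ((bdF n).card : ℝ) / (F n).card) atTop (𝓝 d) := by
        simpa using hdlim.sub hbdry
      refine tendsto_of_tendsto_of_tendsto_of_le_of_le hlow hdlim ?_ ?_
      · intro n
        dsimp only
        rw [div_sub_div_same, div_le_div_iff_of_pos_right (hFpos n)]
        linarith [hcard2 n]
      · intro n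
        dsimp only
        rw [div_le_div_iff_of_pos_right (hFpos n)]
        exact hcard1 n
    -- sums
    have hsumZ : ∀ n, ∑ g ∈ F n, Set.indicator (Z k) 1 g * Set.indicator (B k m) 1 ((g * h) • ω)
        = ∑ g ∈ (F n).filter (· ∈ Z k), Set.indicator (B k m) 1 ((g * h) • ω) := fun n =>
      auxSumIndicator (F n) (Z k) _
    have hsumT : ∀ n, ∑ g ∈ F n, Set.indicator (T n) 1 g * Set.indicator (B k m) 1 ((g * h) • ω)
        = ∑ g ∈ (F n).filter (· ∈ T n), Set.indicator (B k m) 1 ((g * h) • ω) := fun n =>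
      auxSumIndicator (F n) (T n) _
    have hL0a : Tendsto (fun n => ((F n).card : ℝ)⁻¹ *
        ∑ g ∈ (F n).filter (· ∈ Z k), Set.indicator (B k m) 1 ((g * h) • ω)) atTop (𝓝 L0) :=
      hL0.congr fun n => by rw [hsumZ n]
    have hba : ∀ n, ∑ g ∈ (F n).filter (· ∈ T n), Set.indicator (B k m) 1 ((g * h) • ω)
        ≤ ∑ g ∈ (F n).filter (· ∈ Z k), Set.indicator (B k m) 1 ((g * h) • ω) := fun n =>
      Finset.sum_le_sum_of_subset_of_nonneg (hsubTZ n) (fun g _ _ => hv0 g)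
    have hab : ∀ n, ∑ g ∈ (F n).filter (· ∈ Z k), Set.indicator (B k m) 1 ((g * h) • ω)
        ≤ (∑ g ∈ (F n).filter (· ∈ T n), Set.indicator (B k m) 1 ((g * h) • ω))
          + ((bdF n).card : ℝ) := by
      intro n
      have hdecomp := Finset.sum_sdiff (f := fun g => Set.indicator (B k m) (1 : X → ℝ) ((g * h) • ω))
        (hsubTZ n)
      set D := ((F n).filter (· ∈ Z k)) \ ((F n).filter (· ∈ T n)) with hDdef
      have hDsub : D ⊆ bdF n := by
        intro g hg
        rw [hDdef, Finset.mem_sdiff, Finset.mem_filter, Finset.mem_filter] at hg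
        refine Finset.mem_filter.mpr ⟨hg.1.1, fun hS => ?_⟩
        exact hg.2 ⟨hg.1.1, hS, hg.1.2⟩
      have hDsum : ∑ g ∈ D, Set.indicator (B k m) (1 : X → ℝ) ((g * h) • ω) ≤ ((bdF n).card : ℝ) := by
        calc ∑ g ∈ D, Set.indicator (B k m) (1 : X → ℝ) ((g * h) • ω)
            ≤ ∑ _g ∈ D, (1:ℝ) := Finset.sum_le_sum fun g _ => hv1 g
          _ = (D.card : ℝ) := by rw [Finset.sum_const, nsmul_eq_mul, mul_one]
          _ ≤ ((bdF n).card : ℝ) := by exact_mod_cast Finset.card_le_card hDsub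
      linarith [hdecomp, hDsum]
    have hblim : Tendsto (fun n => ((F n).card : ℝ)⁻¹ *
        ∑ g ∈ (F n).filter (· ∈ T n), Set.indicator (B k m) 1 ((g * h) • ω)) atTop (𝓝 L0) := by
      have hlow : Tendsto (fun n => ((F n).card : ℝ)⁻¹ *
          (∑ g ∈ (F n).filter (· ∈ Z k), Set.indicator (B k m) 1 ((g * h) • ω))
          - ((bdF n).card : ℝ) / (F n).card) atTop (𝓝 L0) := by
        simpa using hL0a.sub hbdry
      refine tendsto_of_tendsto_of_tendsto_of_le_of_le hlow hL0a ?_ ?_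
      · intro n
        dsimp only
        have h1 : ((F n).card : ℝ)⁻¹ * (∑ g ∈ (F n).filter (· ∈ Z k),
            Set.indicator (B k m) 1 ((g * h) • ω)) - ((bdF n).card : ℝ) / (F n).card
            = ((F n).card : ℝ)⁻¹ * ((∑ g ∈ (F n).filter (· ∈ Z k),
              Set.indicator (B k m) 1 ((g * h) • ω)) - ((bdF n).card : ℝ)) := by
          rw [mul_sub, div_eq_inv_mul]
        rw [h1]
        apply mul_le_mul_of_nonneg_left _ (inv_nonneg.mpr (hFpos n).le)
        linarith [hab n]
      · intro n
        dsimp only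
        exact mul_le_mul_of_nonneg_left (hba n) (inv_nonneg.mpr (hFpos n).le)
    have hfinal := auxRatio hFpos hdpos hblim hN'lim
    refine hfinal.congr fun n => ?_
    have hNc' : (Nat.card ↥(T n) : ℝ) = (((F n).filter (· ∈ T n)).card : ℝ) := by
      have hts : T n ⊆ (↑(F n) : Set Γ) := fun g hg => hg.1.1.1
      exact_mod_cast auxNatCard (F n) (T n) hts
    rw [← hsumT n, hNc']
end

section
/- In the discrete Heisenberg group H₃ = UT(3, ℤ), for each n ≥ 1 let Z_n := {(a,b,c) ∈ H₃ : n ∣ a, n ∣ b, n² ∣ c} and F_n := {(a,b,c) ∈ H₃ : 0 ≤ a < n, 0 ≤ b < n, 0 ≤ c < n²}. Then Z_n is a subgroup of H₃ (in particular Z_n⁻¹ = Z_n), |F_n| = n⁴, and F_n is a fundamental domain for Z_n: every g ∈ H₃ has a unique representation g = f·z with f ∈ F_n and z ∈ Z_n. In particular each [F_n, Z_n] is a left monotiling of H₃ and the sequence ([F_n, Z_n])_{n≥1} is symmetric. -/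
open scoped Pointwise

/-- The discrete Heisenberg group `H₃ = UT(3, ℤ)`, identified with triples `(a, b, c)`
of integers (the `(1,2)`, `(2,3)` and `(1,3)` entries respectively). -/
@[ext]
structure H3 where
  a : ℤ
  b : ℤ
  c : ℤ

namespace H3

instance : Mul H3 := ⟨fun p q => ⟨p.a + q.a, p.b + q.b, p.c + q.c + p.a * q.b⟩⟩
instance : One H3 := ⟨⟨0, 0, 0⟩⟩
instance : Inv H3 := ⟨fun p => ⟨-p.a, -p.b, p.a * p.b - p.c⟩⟩

@[simp] lemma mul_a (p q : H3) : (p * q).a = p.a + q.a := rfl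
@[simp] lemma mul_b (p q : H3) : (p * q).b = p.b + q.b := rfl
@[simp] lemma mul_c (p q : H3) : (p * q).c = p.c + q.c + p.a * q.b := rfl
@[simp] lemma one_a : (1 : H3).a = 0 := rfl
@[simp] lemma one_b : (1 : H3).b = 0 := rfl
@[simp] lemma one_c : (1 : H3).c = 0 := rfl
@[simp] lemma inv_a (p : H3) : p⁻¹.a = -p.a := rfl
@[simp] lemma inv_b (p : H3) : p⁻¹.b = -p.b := rfl
@[simp] lemma inv_c (p : H3) : p⁻¹.c = p.a * p.b - p.c := rfl

instance : Group H3 where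
  mul_assoc p q r := by ext <;> simp <;> ring
  one_mul p := by ext <;> simp
  mul_one p := by ext <;> simp
  inv_mul_cancel p := by ext <;> simp

end H3

/-- The tile `F_n = {(a,b,c) : 0 ≤ a < n, 0 ≤ b < n, 0 ≤ c < n²}` in `H₃`. -/
def heisTile (n : ℕ) : Set H3 :=
  {g | 0 ≤ g.a ∧ g.a < (n : ℤ) ∧ 0 ≤ g.b ∧ g.b < (n : ℤ) ∧ 0 ≤ g.c ∧ g.c < (n : ℤ) ^ 2}

/-- The set of centers `Z_n = {(a,b,c) : n ∣ a, n ∣ b, n² ∣ c}` in `H₃`. -/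
def heisCenters (n : ℕ) : Set H3 :=
  {g | (n : ℤ) ∣ g.a ∧ (n : ℤ) ∣ g.b ∧ (n : ℤ) ^ 2 ∣ g.c}

theorem stmt17 (n : ℕ) (hn : 1 ≤ n) :
    -- `Z_n` is a subgroup of `H₃`; in particular it is symmetric:
    ((1 : H3) ∈ heisCenters n ∧
      (∀ x ∈ heisCenters n, ∀ y ∈ heisCenters n, x * y ∈ heisCenters n) ∧
      (∀ x ∈ heisCenters n, x⁻¹ ∈ heisCenters n) ∧
      (heisCenters n)⁻¹ = heisCenters n) ∧
    -- `|F_n| = n⁴`: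
    Nat.card ↥(heisTile n) = n ^ 4 ∧
    -- `F_n` is a fundamental domain for `Z_n`, i.e. `[F_n, Z_n]` is a left monotiling:
    ∀ g : H3, ∃! p : H3 × H3,
      p.1 ∈ heisTile n ∧ p.2 ∈ heisCenters n ∧ g = p.1 * p.2 := by
  have hn0 : (0 : ℤ) < n := by exact_mod_cast hn
  have hn2 : (0 : ℤ) < (n : ℤ) ^ 2 := by positivity
  have hmul : ∀ x ∈ heisCenters n, ∀ y ∈ heisCenters n, x * y ∈ heisCenters n := by
    rintro x ⟨⟨i, hi⟩, hx2, hx3⟩ y ⟨hy1, ⟨j, hj⟩, hy3⟩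
    refine ⟨dvd_add ⟨i, hi⟩ hy1, dvd_add hx2 ⟨j, hj⟩, ?_⟩
    simp only [heisCenters, Set.mem_setOf_eq, H3.mul_c]
    exact dvd_add (dvd_add hx3 hy3) ⟨i * j, by rw [hi, hj]; ring⟩
  have hinv : ∀ x ∈ heisCenters n, x⁻¹ ∈ heisCenters n := by
    rintro x ⟨⟨i, hi⟩, ⟨j, hj⟩, hx3⟩
    exact ⟨dvd_neg.2 ⟨i, hi⟩, dvd_neg.2 ⟨j, hj⟩,
      dvd_sub ⟨i * j, by rw [hi, hj]; ring⟩ hx3⟩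
  refine ⟨⟨⟨dvd_zero _, dvd_zero _, dvd_zero _⟩, hmul, hinv, ?_⟩, ?_, ?_⟩
  · ext x
    simp only [Set.mem_inv]
    exact ⟨fun hx => by simpa using hinv _ hx, fun hx => hinv x hx⟩
  · -- cardinality
    have hc2 : ((n : ℤ)) ^ 2 = ((n ^ 2 : ℕ) : ℤ) := by push_cast; ring
    have key : ∀ g : heisTile n, 0 ≤ g.1.a ∧ g.1.a < (n : ℤ) ∧ 0 ≤ g.1.b ∧
        g.1.b < (n : ℤ) ∧ 0 ≤ g.1.c ∧ g.1.c < ((n ^ 2 : ℕ) : ℤ) := by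
      rintro ⟨g, h1, h2, h3, h4, h5, h6⟩
      rw [hc2] at h6
      exact ⟨h1, h2, h3, h4, h5, h6⟩
    have e : heisTile n ≃ Fin n × Fin n × Fin (n ^ 2) := by
      refine ⟨fun g => (⟨g.1.a.toNat, ?_⟩, ⟨g.1.b.toNat, ?_⟩, ⟨g.1.c.toNat, ?_⟩),
        fun x => ⟨⟨(x.1 : ℤ), (x.2.1 : ℤ), (x.2.2 : ℤ)⟩, ?_⟩, fun g => ?_, fun x => ?_⟩
      · have := key g; omega
      · have := key g; omega
      · have := key g; omega
      · have h1 := x.1.2; have h2 := x.2.1.2; have h3 := x.2.2.2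
        simp only [heisTile, Set.mem_setOf_eq, hc2]
        refine ⟨by positivity, by exact_mod_cast h1, by positivity,
          by exact_mod_cast h2, by positivity, by exact_mod_cast h3⟩
      · have := key g
        ext <;> simp [Int.toNat_of_nonneg, this.1, this.2.2.1, this.2.2.2.2.1]
      · ext <;> simp
    rw [Nat.card_congr e]
    simp [Nat.card_prod]
    ring
  · intro g
    set fa := g.a % n with hfa
    set fb := g.b % n with hfb
    set t := g.c - fa * (g.b - fb) with ht
    set fc := t % ((n : ℤ) ^ 2) with hfc
    refine ⟨(⟨fa, fb, fc⟩, ⟨g.a - fa, g.b - fb, t - fc⟩), ⟨?_, ?_, ?_⟩, ?_⟩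
    · exact ⟨Int.emod_nonneg _ hn0.ne', Int.emod_lt_of_pos _ hn0,
        Int.emod_nonneg _ hn0.ne', Int.emod_lt_of_pos _ hn0,
        Int.emod_nonneg _ hn2.ne', Int.emod_lt_of_pos _ hn2⟩
    · exact ⟨Int.dvd_self_sub_of_emod_eq rfl, Int.dvd_self_sub_of_emod_eq rfl,
        Int.dvd_self_sub_of_emod_eq rfl⟩
    · ext <;> simp only [H3.mul_a, H3.mul_b, H3.mul_c] <;> [omega; omega; (rw [ht]; ring)]
    · rintro ⟨f, z⟩ ⟨hf, hz, hg⟩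
      obtain ⟨hf1, hf2, hf3, hf4, hf5, hf6⟩ := hf
      obtain ⟨⟨i, hi⟩, ⟨j, hj⟩, ⟨k, hk⟩⟩ := hz
      have ha : g.a = f.a + z.a := by rw [hg]; simp
      have hb : g.b = f.b + z.b := by rw [hg]; simp
      have hc : g.c = f.c + z.c + f.a * z.b := by rw [hg]; simp
      have hA : fa = f.a := by
        rw [hfa, ha, hi, Int.add_mul_emod_self_left, Int.emod_eq_of_lt hf1 hf2]
      have hB : fb = f.b := by
        rw [hfb, hb, hj, Int.add_mul_emod_self_left, Int.emod_eq_of_lt hf3 hf4]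
      have hC : fc = f.c := by
        have htz : t = f.c + z.c := by
          rw [ht, hc, hA, hB]; have : g.b - f.b = z.b := by omega
          rw [this]; ring
        rw [hfc, htz, hk, Int.add_mul_emod_self_left, Int.emod_eq_of_lt hf5 hf6]
      have hza : z.a = g.a - fa := by omega
      have hzb : z.b = g.b - fb := by omega
      have hzc : z.c = t - fc := by
        rw [ht, hc, hA, hB, hC]; have : g.b - f.b = z.b := by omega
        rw [this]; ring
      ext <;> simp [hA.symm, hB.symm, hC.symm, hza, hzb, hzc]
end
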